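/- arXiv:2503.18232 — 3 statements merged into one kernel-verified Lean document; each statement's English description precedes it below -/
import Mathlib

section
/- Let n ≥ 2 and suppose Ω ⊆ ℝⁿ is an open set whose topological boundary ∂Ω is an unbounded Ahlfors regular set; set σ := ℋ^{n−1} restricted to ∂Ω. Fix a reference point z ∈ ∂Ω and for R > 0 write A_R := Ω ∩ (B(z,2R) ∖ B(z,R)) and Δ(z,r) := B(z,r) ∩ ∂Ω. Then there exist constants C, M, κ̃ ∈ (0,∞), depending only on n and the Ahlfors regularity constants of ∂Ω, such that for every Lebesgue-measurable function u : Ω → ℝ and every R ∈ (0,∞): ∫_{A_R} |u| dℒⁿ ≤ C·R · ∫_{Δ(z,MR) ∖ Δ(z,R/2)} N^{2R}_{κ̃} u dσ. -/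
open MeasureTheory Metric Set Filter
open scoped ENNReal NNReal Topology

noncomputable section

abbrev Euc (n : ℕ) : Type := EuclideanSpace ℝ (Fin n)

variable {n : ℕ}

/-- The nontangential approach region `Γ_κ(x)` to `∂Ω` from within `Ω`. -/
def ntRegion (Ω : Set (Euc n)) (κ : ℝ) (x : Euc n) : Set (Euc n) :=
  {y | y ∈ Ω ∧ dist x y < (1 + κ) * infDist y (frontier Ω)}

/-- The one-sided collar neighborhood `O_ε` of `∂Ω`. -/
def collar (Ω : Set (Euc n)) (ε : ℝ) : Set (Euc n) :=
  {y | y ∈ Ω ∧ infDist y (frontier Ω) < ε}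

/-- Nontangential maximal function of `u` restricted to a set `S` (truncated version). -/
def ntMaxOn {E : Type*} [NormedAddCommGroup E] (Ω S : Set (Euc n)) (κ : ℝ)
    (u : Euc n → E) (x : Euc n) : ℝ≥0∞ :=
  essSup (fun y => (‖u y‖₊ : ℝ≥0∞)) (volume.restrict (ntRegion Ω κ x ∩ S))

/-- Nontangential maximal function `N_κ u`. -/
def ntMax {E : Type*} [NormedAddCommGroup E] (Ω : Set (Euc n)) (κ : ℝ)
    (u : Euc n → E) (x : Euc n) : ℝ≥0∞ :=
  essSup (fun y => (‖u y‖₊ : ℝ≥0∞)) (volume.restrict (ntRegion Ω κ x))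

/-- `u` has κ-nontangential trace `v` at the boundary point `x`. -/
def HasNTTrace {E : Type*} [NormedAddCommGroup E] (Ω : Set (Euc n)) (κ : ℝ)
    (u : Euc n → E) (x : Euc n) (v : E) : Prop :=
  x ∈ closure (ntRegion Ω κ x) ∧
  ∃ N : Set (Euc n), N ⊆ ntRegion Ω κ x ∧ volume N = 0 ∧
    Tendsto u (nhdsWithin x (ntRegion Ω κ x \ N)) (nhds v)

/-- `Sig` is an Ahlfors regular set (of dimension `n-1`) with constant `C`. -/
def AhlforsRegularWith (n : ℕ) (Sig : Set (Euc n)) (C : ℝ) : Prop :=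
  1 < C ∧ IsClosed Sig ∧ ∀ x ∈ Sig, ∀ r : ℝ, 0 < r →
    ENNReal.ofReal r < 2 * EMetric.diam Sig →
    ENNReal.ofReal (C⁻¹ * r ^ (n - 1)) ≤ μH[(n : ℝ) - 1] (Sig ∩ ball x r) ∧
      μH[(n : ℝ) - 1] (Sig ∩ ball x r) ≤ ENNReal.ofReal (C * r ^ (n - 1))

/-- The measure-theoretic (geometric measure theoretic) boundary `∂*Ω`. -/
def mtBoundary (n : ℕ) (Ω : Set (Euc n)) : Set (Euc n) :=
  {x | 0 < limsup (fun r : ℝ => volume (Ω ∩ ball x r) / ENNReal.ofReal (r ^ n)) (𝓝[>] 0) ∧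
       0 < limsup (fun r : ℝ => volume (Ωᶜ ∩ ball x r) / ENNReal.ofReal (r ^ n)) (𝓝[>] 0)}

/-- The nontangentially accessible boundary `∂_nta Ω`. -/
def ntaBoundary (n : ℕ) (Ω : Set (Euc n)) : Set (Euc n) :=
  {x | x ∈ frontier Ω ∧ ∀ κ : ℝ, 0 < κ → x ∈ closure (ntRegion Ω κ x)}

/-- The Laplacian `Δu = ∑ ∂²u/∂x_j²`, via iterated Fréchet derivatives. -/
def laplacian (u : Euc n → ℝ) (x : Euc n) : ℝ :=
  ∑ i : Fin n, fderiv ℝ (fun z => fderiv ℝ u z (EuclideanSpace.single i 1)) x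
    (EuclideanSpace.single i 1)

/-- `u` is harmonic on the open set `Ω`. -/
def HarmonicOn' (u : Euc n → ℝ) (Ω : Set (Euc n)) : Prop :=
  ContDiffOn ℝ 2 u Ω ∧ ∀ x ∈ Ω, laplacian u x = 0

/-- `w` is (continuous and) subharmonic on the open set `Ω`, via the sub-mean value property. -/
def SubharmonicOn (w : Euc n → ℝ) (Ω : Set (Euc n)) : Prop :=
  ContinuousOn w Ω ∧ ∀ x ∈ Ω, ∀ r : ℝ, 0 < r → closedBall x r ⊆ Ω →
    w x ≤ ⨍ y in ball x r, w y

/-- `Sig` is a uniformly rectifiable (UR) set: closed, Ahlfors regular, with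
Big Pieces of Lipschitz Images. -/
def IsURSet (n : ℕ) (Sig : Set (Euc n)) : Prop :=
  IsClosed Sig ∧ (∃ C : ℝ, AhlforsRegularWith n Sig C) ∧
  ∃ ε : ℝ, 0 < ε ∧ ∃ M₀ : ℝ≥0, ∀ x ∈ Sig, ∀ r : ℝ, 0 < r →
    ENNReal.ofReal r < EMetric.diam Sig →
    ∃ Φ : EuclideanSpace ℝ (Fin (n - 1)) → Euc n, LipschitzWith M₀ Φ ∧
      ENNReal.ofReal (ε * r ^ (n - 1)) ≤
        μH[(n : ℝ) - 1] (Sig ∩ ball x r ∩ Φ '' ball (0 : EuclideanSpace ℝ (Fin (n - 1))) r)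

end

/-!
Split `A_R` according to whether `δ(y) = dist(y, ∂Ω)` is at least `R/4` or not, and let
`D = Δ(z, MR) \ Δ(z, R/2)` with `M = 3 C₀²`; Ahlfors regularity makes `σ(D) ≳ R^{n-1}`.

Far part: with `κ = 4(M + 2)`, each such `y` lies in `Γ_κ(x) ∩ O_{2R}` for every `x ∈ D`, so
the integral over this part is at most `|B(z, 2R)| N(x)`; averaging over `x ∈ D` gives the bound.

Near part: the shadow `S(y) = {x ∈ ∂Ω : |x - y| < 2δ(y)}` contains the surface ball of radius
`δ(y)` around a nearest boundary point, so `σ(S(y)) ≳ δ(y)^{n-1}`, and `S(y) ⊆ D`. Writing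
`|u(y)| ≲ δ(y)^{1-n} |u(y)| σ(S(y))` and applying Tonelli, it remains to bound, for `x ∈ D`, the
integral of `δ(y)^{1-n} |u(y)|` over `{y : x ∈ S(y)}`. There `y ∈ Γ_κ(x)` and `δ(y) > |x - y|/2`,
so splitting into dyadic balls `B(x, R/2^{j+1})` gives `≲ N(x) Σ_j R/2^j ≲ R N(x)`.
-/

section MeasureLemmas

variable {α β : Type*} [MeasurableSpace α] [MeasurableSpace β]

theorem setLIntegral_le_essSup_mul_measure {μ : Measure α} {f : α → ℝ≥0∞} {Q S : Set α}
    (hQS : Q ⊆ S) : ∫⁻ y in Q, f y ∂μ ≤ essSup f (μ.restrict S) * μ Q := by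
  calc ∫⁻ y in Q, f y ∂μ ≤ ∫⁻ _ in Q, essSup f (μ.restrict S) ∂μ :=
        lintegral_mono_ae <| ae_mono (Measure.restrict_mono hQS le_rfl) (ENNReal.ae_le_essSup f)
    _ = essSup f (μ.restrict S) * μ Q := setLIntegral_const Q _

theorem setLIntegral_mul_measure_le_measure_mul_setLIntegral_essSup {μ : Measure α}
    {ν : Measure β} {f : α → ℝ≥0∞} {F : Set α} {S : β → Set α} {D : Set β}
    (hD : MeasurableSet D) (hF : μ F ≠ ⊤) (hFS : ∀ x ∈ D, F ⊆ S x) :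
    (∫⁻ y in F, f y ∂μ) * ν D ≤ μ F * ∫⁻ x in D, essSup f (μ.restrict (S x)) ∂ν := by
  calc (∫⁻ y in F, f y ∂μ) * ν D = ∫⁻ _ in D, ∫⁻ y in F, f y ∂μ ∂ν :=
        (setLIntegral_const D _).symm
    _ ≤ ∫⁻ x in D, μ F * essSup f (μ.restrict (S x)) ∂ν := by
        refine setLIntegral_mono' hD fun x hx => ?_
        rw [mul_comm]
        exact setLIntegral_le_essSup_mul_measure (hFS x hx)
    _ = μ F * ∫⁻ x in D, essSup f (μ.restrict (S x)) ∂ν := lintegral_const_mul' _ _ hF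

theorem lintegral_mul_measure_slice_eq {μ : Measure α} {ν : Measure β} [SFinite μ] [SFinite ν]
    {W : Set (α × β)} (hW : MeasurableSet W) {h : α → ℝ≥0∞} (hh : Measurable h) :
    ∫⁻ y, h y * ν (Prod.mk y ⁻¹' W) ∂μ = ∫⁻ x, ∫⁻ y in (·, x) ⁻¹' W, h y ∂μ ∂ν := by
  calc ∫⁻ y, h y * ν (Prod.mk y ⁻¹' W) ∂μ
      = ∫⁻ y, ∫⁻ x, W.indicator (h ∘ Prod.fst) (y, x) ∂ν ∂μ := by
        congr 1 with y
        exact (lintegral_indicator_const (measurable_prodMk_left hW) (h y)).symm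
    _ = ∫⁻ x, ∫⁻ y, W.indicator (h ∘ Prod.fst) (y, x) ∂μ ∂ν :=
        lintegral_lintegral_swap ((hh.comp measurable_fst).indicator hW).aemeasurable
    _ = ∫⁻ x, ∫⁻ y in (·, x) ⁻¹' W, h y ∂μ ∂ν := by
        congr 1 with x
        exact lintegral_indicator (measurable_prodMk_right hW) h

end MeasureLemmas

theorem exists_dyadic_radius {d ρ : ℝ} (hd : 0 < d) (hdρ : d ≤ ρ) (m : ℕ) :
    ∃ j : ℕ, d ≤ ρ / 2 ^ j ∧ (d ^ m)⁻¹ ≤ 2 ^ m / (ρ / 2 ^ j) ^ m := by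
  obtain ⟨j, hj, hj'⟩ := exists_nat_pow_near ((one_le_div hd).2 hdρ) one_lt_two
  have hpos : (0 : ℝ) < 2 ^ j := by positivity
  have hρ : 0 < ρ := hd.trans_le hdρ
  refine ⟨j, (le_div_iff₀ hpos).2 (by rwa [le_div_iff₀ hd, mul_comm] at hj), ?_⟩
  have hlt : ρ / 2 ^ j < 2 * d := by
    rw [div_lt_iff₀ hd, pow_succ] at hj'
    rw [div_lt_iff₀ hpos]; linarith
  rw [← div_pow, ← inv_div, inv_pow]
  exact inv_anti₀ (by positivity)
    (pow_le_pow_left₀ (by positivity) ((div_le_iff₀' two_pos).2 hlt.le) m)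

theorem setLIntegral_mul_inv_dist_pow_le {X : Type*} [MetricSpace X] [MeasurableSpace X]
    [OpensMeasurableSpace X] {μ : Measure X} {f : X → ℝ≥0∞} (hf : AEMeasurable f μ)
    (x : X) (m : ℕ) {ρ : ℝ} (hρ : 0 < ρ) {A : ℝ≥0∞}
    (hgrowth : ∀ r, 0 < r → r ≤ ρ →
      ∫⁻ y in closedBall x r, f y ∂μ ≤ A * ENNReal.ofReal (r ^ (m + 1))) :
    ∫⁻ y in closedBall x ρ \ {x}, f y * ENNReal.ofReal ((dist x y ^ m)⁻¹) ∂μ ≤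
      A * ENNReal.ofReal (2 ^ (m + 1) * ρ) := by
  set r : ℕ → ℝ := fun j => ρ / 2 ^ j
  set c : ℕ → ℝ≥0∞ := fun j => ENNReal.ofReal (2 ^ m / r j ^ m)
  have hr : ∀ j, 0 < r j := fun j => by positivity
  have hpt : ∀ y ∈ closedBall x ρ \ {x}, f y * ENNReal.ofReal ((dist x y ^ m)⁻¹) ≤
      ∑' j, (closedBall x (r j)).indicator (fun y => c j * f y) y := by
    rintro y ⟨hyρ, hyx⟩
    obtain ⟨j, hj, hj'⟩ :=
      exists_dyadic_radius (dist_pos.2 (Ne.symm hyx)) (mem_closedBall'.1 hyρ) m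
    calc f y * ENNReal.ofReal ((dist x y ^ m)⁻¹) ≤ c j * f y := by
          rw [mul_comm]; exact mul_le_mul_left (ENNReal.ofReal_le_ofReal hj') _
      _ = (closedBall x (r j)).indicator (fun y => c j * f y) y :=
          (indicator_of_mem (mem_closedBall'.2 hj) fun y => c j * f y).symm
      _ ≤ _ := ENNReal.le_tsum j
  calc ∫⁻ y in closedBall x ρ \ {x}, f y * ENNReal.ofReal ((dist x y ^ m)⁻¹) ∂μ
      ≤ ∫⁻ y in closedBall x ρ \ {x},
          ∑' j, (closedBall x (r j)).indicator (fun y => c j * f y) y ∂μ :=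
        setLIntegral_mono' (measurableSet_closedBall.diff (measurableSet_singleton x)) hpt
    _ ≤ ∫⁻ y, ∑' j, (closedBall x (r j)).indicator (fun y => c j * f y) y ∂μ :=
        setLIntegral_le_lintegral _ _
    _ = ∑' j, c j * ∫⁻ y in closedBall x (r j), f y ∂μ := by
        rw [lintegral_tsum fun j => (hf.const_mul _).indicator measurableSet_closedBall]
        congr 1 with j
        rw [lintegral_indicator measurableSet_closedBall,
          lintegral_const_mul'' _ hf.restrict]
    _ ≤ ∑' j, A * ENNReal.ofReal (2 ^ (m + 1) * ρ / 2 / 2 ^ j) := by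
        refine ENNReal.tsum_le_tsum fun j => ?_
        calc c j * ∫⁻ y in closedBall x (r j), f y ∂μ
            ≤ c j * (A * ENNReal.ofReal (r j ^ (m + 1))) :=
              by gcongr; exact hgrowth _ (hr j) (div_le_self hρ.le (one_le_pow₀ one_le_two))
          _ = A * ENNReal.ofReal (2 ^ (m + 1) * ρ / 2 / 2 ^ j) := by
              rw [mul_left_comm, ← ENNReal.ofReal_mul (by positivity)]
              congr 2
              rw [pow_succ, ← mul_assoc, div_mul_cancel₀ _ (pow_ne_zero _ (hr j).ne')]
              ring
    _ = A * ENNReal.ofReal (2 ^ (m + 1) * ρ) := by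
        rw [ENNReal.tsum_mul_left, ← ENNReal.ofReal_tsum_of_nonneg (fun j => by positivity)
          (summable_geometric_two' _), tsum_geometric_two']

noncomputable def unitBallVolume (n : ℕ) : ℝ := (volume (ball (0 : Euc n) 1)).toReal

theorem unitBallVolume_pos (n : ℕ) : 0 < unitBallVolume n :=
  ENNReal.toReal_pos (measure_ball_pos _ _ one_pos).ne' measure_ball_lt_top.ne

theorem Euc.volume_closedBall {n : ℕ} (x : Euc n) {r : ℝ} (hr : 0 ≤ r) :
    volume (closedBall x r) = ENNReal.ofReal (unitBallVolume n * r ^ n) := by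
  rw [Measure.addHaar_closedBall volume x hr, finrank_euclideanSpace_fin, unitBallVolume,
    ENNReal.ofReal_mul ENNReal.toReal_nonneg, ENNReal.ofReal_toReal measure_ball_lt_top.ne,
    mul_comm]

theorem Euc.setLIntegral_closedBall_le_essSup_mul {n : ℕ} {f : Euc n → ℝ≥0∞} (S : Set (Euc n))
    (x : Euc n) {r : ℝ} (hr : 0 ≤ r) :
    ∫⁻ y in closedBall x r, f y ∂volume.restrict S ≤
      essSup f (volume.restrict S) * ENNReal.ofReal (unitBallVolume n) *
        ENNReal.ofReal (r ^ n) := by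
  rw [Measure.restrict_restrict measurableSet_closedBall, mul_assoc,
    ← ENNReal.ofReal_mul (unitBallVolume_pos n).le, ← Euc.volume_closedBall x hr]
  calc _ ≤ essSup f (volume.restrict S) * volume (closedBall x r ∩ S) :=
        setLIntegral_le_essSup_mul_measure inter_subset_right
    _ ≤ _ := by gcongr; exact inter_subset_left

noncomputable def boundaryShadow {n : ℕ} (Sig : Set (Euc n)) (y : Euc n) : Set (Euc n) :=
  {x | x ∈ Sig ∧ dist x y < 2 * infDist y Sig}

section Ahlfors

variable {n : ℕ} {Sig : Set (Euc n)} {C : ℝ}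

theorem AhlforsRegularWith.measure_inter_ball_bounds (h : AhlforsRegularWith n Sig C)
    (hub : ¬ Bornology.IsBounded Sig) {x : Euc n} (hx : x ∈ Sig) {r : ℝ} (hr : 0 < r) :
    ENNReal.ofReal (C⁻¹ * r ^ (n - 1)) ≤ μH[(n : ℝ) - 1] (Sig ∩ ball x r) ∧
      μH[(n : ℝ) - 1] (Sig ∩ ball x r) ≤ ENNReal.ofReal (C * r ^ (n - 1)) := by
  refine h.2.2 x hx r hr ?_
  change ENNReal.ofReal r < 2 * ediam Sig
  rw [ediam_eq_top_iff_unbounded.2 hub, ENNReal.mul_top two_ne_zero]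
  exact ENNReal.ofReal_lt_top

theorem AhlforsRegularWith.ofReal_le_measure_annulus (h : AhlforsRegularWith n Sig C)
    (hub : ¬ Bornology.IsBounded Sig) (hn : 2 ≤ n) {z : Euc n} (hz : z ∈ Sig) {R : ℝ}
    (hR : 0 < R) :
    ENNReal.ofReal (C * R ^ (n - 1)) ≤ (μH[(n : ℝ) - 1].restrict Sig)
      ((ball z (3 * C ^ 2 * R) ∩ Sig) \ (ball z (R / 2) ∩ Sig)) := by
  have hC : 0 < C := one_pos.trans h.1
  have hσ : ∀ r, (μH[(n : ℝ) - 1].restrict Sig) (ball z r ∩ Sig) =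
      μH[(n : ℝ) - 1] (Sig ∩ ball z r) := fun r => by
    rw [Measure.restrict_apply' h.2.1.measurableSet, inter_assoc, inter_self, inter_comm]
  have hM : 3 * C ≤ C⁻¹ * (3 * C ^ 2) ^ (n - 1) :=
    calc 3 * C = C⁻¹ * (3 * C ^ 2) := by field_simp
      _ ≤ C⁻¹ * (3 * C ^ 2) ^ (n - 1) := by
          gcongr; exact le_self_pow₀ (by nlinarith [h.1]) (by omega)
  have hR' : (R / 2) ^ (n - 1) ≤ R ^ (n - 1) := pow_le_pow_left₀ (by positivity) (by linarith) _
  have hreal : C * R ^ (n - 1) ≤ C⁻¹ * (3 * C ^ 2 * R) ^ (n - 1) - C * (R / 2) ^ (n - 1) := by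
    rw [mul_pow, ← mul_assoc]
    linarith [mul_le_mul_of_nonneg_right hM (by positivity : (0 : ℝ) ≤ R ^ (n - 1)),
      mul_le_mul_of_nonneg_left hR' hC.le, mul_nonneg hC.le (pow_nonneg hR.le (n - 1))]
  calc ENNReal.ofReal (C * R ^ (n - 1))
      ≤ ENNReal.ofReal (C⁻¹ * (3 * C ^ 2 * R) ^ (n - 1)) -
          ENNReal.ofReal (C * (R / 2) ^ (n - 1)) := by
        rw [← ENNReal.ofReal_sub _ (by positivity)]
        exact ENNReal.ofReal_le_ofReal hreal
    _ ≤ _ - _ := by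
        rw [hσ, hσ]
        exact tsub_le_tsub (h.measure_inter_ball_bounds hub hz (by positivity)).1
          (h.measure_inter_ball_bounds hub hz (by positivity)).2
    _ ≤ _ := le_measure_sdiff

theorem AhlforsRegularWith.ofReal_le_measure_boundaryShadow (h : AhlforsRegularWith n Sig C)
    (hub : ¬ Bornology.IsBounded Sig) {y : Euc n} (hy : y ∉ Sig) :
    ENNReal.ofReal (C⁻¹ * infDist y Sig ^ (n - 1)) ≤ μH[(n : ℝ) - 1] (boundaryShadow Sig y) := by
  have hne := Bornology.nonempty_of_not_isBounded hub
  obtain ⟨w, hw, hyw⟩ := h.2.1.exists_infDist_eq_dist hne y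
  calc ENNReal.ofReal (C⁻¹ * infDist y Sig ^ (n - 1))
      ≤ μH[(n : ℝ) - 1] (Sig ∩ ball w (infDist y Sig)) :=
        (h.measure_inter_ball_bounds hub hw ((h.2.1.notMem_iff_infDist_pos hne).1 hy)).1
    _ ≤ μH[(n : ℝ) - 1] (boundaryShadow Sig y) := measure_mono fun x hx =>
        ⟨hx.1, by linarith [dist_triangle x w y, mem_ball.1 hx.2, dist_comm y w]⟩

end Ahlfors

section NontangentialRegions

variable {n : ℕ} {Ω : Set (Euc n)}

theorem isOpen_ntRegion (hΩ : IsOpen Ω) (κ : ℝ) (x : Euc n) : IsOpen (ntRegion Ω κ x) :=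
  hΩ.inter <| isOpen_lt (continuous_const.dist continuous_id)
    (continuous_const.mul (continuous_infDist_pt _))

theorem isOpen_collar (hΩ : IsOpen Ω) (ε : ℝ) : IsOpen (collar Ω ε) :=
  hΩ.inter <| isOpen_lt (continuous_infDist_pt _) continuous_const

end NontangentialRegions

section BoundaryLayer

variable {n : ℕ} {Ω : Set (Euc n)} {C₀ κ ε ρ : ℝ} {u : Euc n → ℝ} {T D : Set (Euc n)}

theorem mem_ntRegion_of_mem_boundaryShadow (hκ : 1 ≤ κ) {x y : Euc n} (hy : y ∈ Ω)
    (hx : x ∈ boundaryShadow (frontier Ω) y) : y ∈ ntRegion Ω κ x :=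
  ⟨hy, by nlinarith [hx.2, infDist_nonneg (x := y) (s := frontier Ω)]⟩

theorem setLIntegral_shadow_weight_le_ntMaxOn (hn : 1 ≤ n) (hΩ : IsOpen Ω) (hC₀ : 0 < C₀)
    (hκ : 1 ≤ κ) (hρ : 0 < ρ) (hu : Measurable u) (hTΩ : T ⊆ Ω)
    (hTε : ∀ y ∈ T, infDist y (frontier Ω) < ε)
    (hTρ : ∀ y ∈ T, 2 * infDist y (frontier Ω) ≤ ρ) (x : Euc n) :
    ∫⁻ y in {y | x ∈ boundaryShadow (frontier Ω) y} ∩ T,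
        ‖u y‖₊ * ENNReal.ofReal (C₀ * (infDist y (frontier Ω) ^ (n - 1))⁻¹) ≤
      ENNReal.ofReal (unitBallVolume n * C₀ * 2 ^ (n - 1) * 2 ^ n * ρ) *
        ntMaxOn Ω (collar Ω ε) κ u x := by
  obtain ⟨m, rfl⟩ : ∃ m, n = m + 1 := ⟨n - 1, by omega⟩
  rw [Nat.add_sub_cancel]
  set N := ntMaxOn Ω (collar Ω ε) κ u
  set Reg := ntRegion Ω κ x ∩ collar Ω ε
  set B := closedBall x ρ \ {x}
  set c := ENNReal.ofReal (C₀ * 2 ^ m)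
  set w : Euc (m + 1) → ℝ≥0∞ := fun y => ENNReal.ofReal ((dist x y ^ m)⁻¹)
  have hB : MeasurableSet B := measurableSet_closedBall.diff (measurableSet_singleton x)
  have hReg : MeasurableSet Reg :=
    ((isOpen_ntRegion hΩ κ x).inter (isOpen_collar hΩ ε)).measurableSet
  have hpt : ∀ y ∈ {y | x ∈ boundaryShadow (frontier Ω) y} ∩ T, y ∈ B ∩ Reg ∧
      ‖u y‖₊ * ENNReal.ofReal (C₀ * (infDist y (frontier Ω) ^ m)⁻¹) ≤ c * (‖u y‖₊ * w y) := by
    rintro y ⟨hx, hy⟩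
    have hyΩ := hTΩ hy
    have hd : 0 < dist x y :=
      dist_pos.2 fun h => (disjoint_frontier_iff_isOpen.2 hΩ).notMem_of_mem_left hx.1 (h ▸ hyΩ)
    refine ⟨⟨⟨mem_closedBall'.2 (by linarith [hx.2, hTρ y hy]),
      fun h => hd.ne' (dist_eq_zero.2 h.symm)⟩,
      mem_ntRegion_of_mem_boundaryShadow hκ hyΩ hx, hyΩ, hTε y hy⟩, ?_⟩
    rw [mul_left_comm, ← ENNReal.ofReal_mul (by positivity), mul_assoc]
    gcongr
    calc (infDist y (frontier Ω) ^ m)⁻¹ ≤ ((dist x y / 2) ^ m)⁻¹ := by gcongr; linarith [hx.2]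
      _ = 2 ^ m * (dist x y ^ m)⁻¹ := by rw [div_pow, inv_div, div_eq_mul_inv]
  have hgrowth : ∀ r, 0 < r → r ≤ ρ →
      ∫⁻ y in closedBall x r, (‖u y‖₊ : ℝ≥0∞) ∂volume.restrict Reg ≤
        N x * ENNReal.ofReal (unitBallVolume (m + 1)) * ENNReal.ofReal (r ^ (m + 1)) :=
    fun r hr _ => Euc.setLIntegral_closedBall_le_essSup_mul Reg x hr.le
  have hw : Measurable w := ENNReal.measurable_ofReal.comp
    ((continuous_const.dist continuous_id).measurable.pow_const m).inv
  calc _ ≤ ∫⁻ y in {y | x ∈ boundaryShadow (frontier Ω) y} ∩ T, c * (‖u y‖₊ * w y) :=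
        setLIntegral_mono (measurable_const.mul (hu.nnnorm.coe_nnreal_ennreal.mul hw))
          fun y hy => (hpt y hy).2
    _ ≤ ∫⁻ y in B ∩ Reg, c * (‖u y‖₊ * w y) := lintegral_mono_set fun y hy => (hpt y hy).1
    _ = c * ∫⁻ y in B, ‖u y‖₊ * w y ∂volume.restrict Reg := by
        rw [Measure.restrict_restrict hB, lintegral_const_mul' _ _ ENNReal.ofReal_ne_top]
    _ ≤ c * (N x * ENNReal.ofReal (unitBallVolume (m + 1)) * ENNReal.ofReal (2 ^ (m + 1) * ρ)) := by
        gcongr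
        exact setLIntegral_mul_inv_dist_pow_le hu.nnnorm.coe_nnreal_ennreal.aemeasurable x m hρ
          hgrowth
    _ = c * ENNReal.ofReal (unitBallVolume (m + 1)) * ENNReal.ofReal (2 ^ (m + 1) * ρ) * N x := by
        ring
    _ = _ := by
        rw [← ENNReal.ofReal_mul (by positivity),
          ← ENNReal.ofReal_mul (mul_nonneg (by positivity) (unitBallVolume_pos _).le)]
        ring_nf

theorem setLIntegral_nnnorm_le_of_boundaryShadow_subset (hn : 1 ≤ n) (hΩ : IsOpen Ω)
    (hA : AhlforsRegularWith n (frontier Ω) C₀) (hub : ¬ Bornology.IsBounded (frontier Ω))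
    (hκ : 1 ≤ κ) (hρ : 0 < ρ) (hu : Measurable u) (hT : MeasurableSet T)
    (hD : MeasurableSet D) (hDfin : μH[(n : ℝ) - 1] D ≠ ⊤) (hTΩ : T ⊆ Ω)
    (hTε : ∀ y ∈ T, infDist y (frontier Ω) < ε)
    (hTρ : ∀ y ∈ T, 2 * infDist y (frontier Ω) ≤ ρ)
    (hshadow : ∀ y ∈ T, boundaryShadow (frontier Ω) y ⊆ D) :
    ∫⁻ y in T, (‖u y‖₊ : ℝ≥0∞) ≤
      ENNReal.ofReal (unitBallVolume n * C₀ * 2 ^ (n - 1) * 2 ^ n * ρ) *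
        ∫⁻ x in D, ntMaxOn Ω (collar Ω ε) κ u x ∂((μH[(n : ℝ) - 1]).restrict (frontier Ω)) := by
  set σ := (μH[(n : ℝ) - 1]).restrict (frontier Ω)
  set δ : Euc n → ℝ := fun y => infDist y (frontier Ω)
  set g : Euc n → ℝ≥0∞ := fun y => ‖u y‖₊ * ENNReal.ofReal (C₀ * (δ y ^ (n - 1))⁻¹)
  set W : Set (Euc n × Euc n) := {p | p.2 ∈ boundaryShadow (frontier Ω) p.1}
  have hC₀ : 0 < C₀ := one_pos.trans hA.1
  have hδ : Continuous δ := continuous_infDist_pt _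
  have hW : MeasurableSet W := (isClosed_frontier.measurableSet.preimage measurable_snd).inter
    (measurableSet_lt (continuous_snd.dist continuous_fst).measurable
      (continuous_const.mul (hδ.comp continuous_fst)).measurable)
  have hg : Measurable g := hu.nnnorm.coe_nnreal_ennreal.mul
    (ENNReal.measurable_ofReal.comp (measurable_const.mul (hδ.measurable.pow_const _).inv))
  have : IsFiniteMeasure (σ.restrict D) := isFiniteMeasure_restrict.2 <| by
    rw [Measure.restrict_apply hD]
    exact ((measure_mono inter_subset_left).trans_lt hDfin.lt_top).ne
  have hnorm_le : ∀ y ∈ T, (‖u y‖₊ : ℝ≥0∞) ≤ g y * σ.restrict D (Prod.mk y ⁻¹' W) := by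
    intro y hy
    have hyf : y ∉ frontier Ω := (disjoint_frontier_iff_isOpen.2 hΩ).notMem_of_mem_right (hTΩ hy)
    have hδy : 0 < δ y :=
      (isClosed_frontier.notMem_iff_infDist_pos (Bornology.nonempty_of_not_isBounded hub)).1 hyf
    have hS : MeasurableSet (boundaryShadow (frontier Ω) y) := measurable_prodMk_left hW
    change _ ≤ g y * σ.restrict D (boundaryShadow (frontier Ω) y)
    rw [Measure.restrict_eq_self _ (hshadow y hy), Measure.restrict_apply hS,
      inter_eq_left.2 fun x hx => hx.1]
    calc (‖u y‖₊ : ℝ≥0∞) = g y * ENNReal.ofReal (C₀⁻¹ * δ y ^ (n - 1)) := by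
          rw [mul_assoc, ← ENNReal.ofReal_mul (by positivity)]
          field_simp
          simp
      _ ≤ _ := by gcongr; exact hA.ofReal_le_measure_boundaryShadow hub hyf
  calc ∫⁻ y in T, (‖u y‖₊ : ℝ≥0∞) ≤ ∫⁻ y in T, g y * σ.restrict D (Prod.mk y ⁻¹' W) :=
        setLIntegral_mono' hT hnorm_le
    _ = ∫⁻ x in D, ∫⁻ y in (·, x) ⁻¹' W, g y ∂volume.restrict T ∂σ :=
        lintegral_mul_measure_slice_eq hW hg
    _ ≤ ∫⁻ x in D, ENNReal.ofReal (unitBallVolume n * C₀ * 2 ^ (n - 1) * 2 ^ n * ρ) *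
          ntMaxOn Ω (collar Ω ε) κ u x ∂σ := lintegral_mono fun x => by
        rw [Measure.restrict_restrict' hT]
        exact setLIntegral_shadow_weight_le_ntMaxOn hn hΩ hC₀ hκ hρ hu hTΩ hTε hTρ x
    _ = _ := lintegral_const_mul' _ _ ENNReal.ofReal_ne_top

end BoundaryLayer

section Annulus

variable {n : ℕ} {Ω : Set (Euc n)} {C₀ κ R : ℝ} {z : Euc n}

theorem setLIntegral_annulus_near_le (hn : 1 ≤ n) (hΩ : IsOpen Ω)
    (hA : AhlforsRegularWith n (frontier Ω) C₀) (hub : ¬ Bornology.IsBounded (frontier Ω))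
    (hz : z ∈ frontier Ω) (hR : 0 < R) (hκ : 1 ≤ κ) {u : Euc n → ℝ} (hu : Measurable u) :
    ∫⁻ y in Ω ∩ (ball z (2 * R) \ ball z R) ∩ {y | infDist y (frontier Ω) < R / 4},
        (‖u y‖₊ : ℝ≥0∞) ≤
      ENNReal.ofReal (unitBallVolume n * C₀ * 2 ^ (n - 1) * 2 ^ n * (R / 2)) *
        ∫⁻ x in (ball z (3 * C₀ ^ 2 * R) ∩ frontier Ω) \ (ball z (R / 2) ∩ frontier Ω),
          ntMaxOn Ω (collar Ω (2 * R)) κ u x ∂((μH[(n : ℝ) - 1]).restrict (frontier Ω)) := by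
  have hfr : MeasurableSet (frontier Ω) := isClosed_frontier.measurableSet
  have hM : 3 ≤ 3 * C₀ ^ 2 := by nlinarith [hA.1]
  refine setLIntegral_nnnorm_le_of_boundaryShadow_subset hn hΩ hA hub hκ (by positivity)
    hu ((hΩ.measurableSet.inter (measurableSet_ball.diff measurableSet_ball)).inter
      (measurableSet_lt (continuous_infDist_pt _).measurable measurable_const))
    ((measurableSet_ball.inter hfr).diff (measurableSet_ball.inter hfr)) ?_
    (fun y hy => hy.1.1) (fun y hy => by linarith [hy.2.out])
    (fun y hy => by linarith [hy.2.out]) ?_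
  · refine ne_top_of_le_ne_top ENNReal.ofReal_ne_top ((measure_mono fun x hx => ?_).trans
      (hA.measure_inter_ball_bounds hub hz (by positivity : 0 < 3 * C₀ ^ 2 * R)).2)
    exact ⟨hx.1.2, hx.1.1⟩
  · rintro y ⟨⟨-, hy2R, hyR⟩, hyδ⟩ x ⟨hx, hxy⟩
    rw [mem_ball] at hy2R
    rw [mem_ball, not_lt] at hyR
    have hxy' : dist x y < R / 2 := by linarith [hyδ.out]
    refine ⟨⟨mem_ball.2 ?_, hx⟩, fun h => ?_⟩
    · nlinarith [dist_triangle x y z]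
    · linarith [mem_ball.1 h.1, dist_triangle_left y z x, dist_comm x y]

theorem setLIntegral_annulus_far_le (hn : 2 ≤ n)
    (hA : AhlforsRegularWith n (frontier Ω) C₀) (hub : ¬ Bornology.IsBounded (frontier Ω))
    (hz : z ∈ frontier Ω) (hR : 0 < R) (hκ : 4 * (3 * C₀ ^ 2 + 2) ≤ κ) (u : Euc n → ℝ) :
    ∫⁻ y in Ω ∩ (ball z (2 * R) \ ball z R) ∩ {y | R / 4 ≤ infDist y (frontier Ω)},
        (‖u y‖₊ : ℝ≥0∞) ≤
      ENNReal.ofReal (unitBallVolume n * 2 ^ n / C₀ * R) *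
        ∫⁻ x in (ball z (3 * C₀ ^ 2 * R) ∩ frontier Ω) \ (ball z (R / 2) ∩ frontier Ω),
          ntMaxOn Ω (collar Ω (2 * R)) κ u x ∂((μH[(n : ℝ) - 1]).restrict (frontier Ω)) := by
  set F := Ω ∩ (ball z (2 * R) \ ball z R) ∩ {y | R / 4 ≤ infDist y (frontier Ω)}
  set D := (ball z (3 * C₀ ^ 2 * R) ∩ frontier Ω) \ (ball z (R / 2) ∩ frontier Ω)
  set I := ∫⁻ x in D, ntMaxOn Ω (collar Ω (2 * R)) κ u x ∂((μH[(n : ℝ) - 1]).restrict (frontier Ω))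
  have hC₀ : 0 < C₀ := one_pos.trans hA.1
  have hfr : MeasurableSet (frontier Ω) := isClosed_frontier.measurableSet
  have hFreg : ∀ x ∈ D, F ⊆ ntRegion Ω κ x ∩ collar Ω (2 * R) := by
    rintro x ⟨⟨hxz, -⟩, -⟩ y ⟨⟨hy, hyz, -⟩, hyδ⟩
    rw [mem_ball] at hxz hyz
    have hyδ : R / 4 ≤ infDist y (frontier Ω) := hyδ
    refine ⟨⟨hy, ?_⟩, hy, (infDist_le_dist_of_mem hz).trans_lt hyz⟩
    nlinarith [dist_triangle x z y, dist_comm y z]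
  have hvol : volume F ≤ ENNReal.ofReal (unitBallVolume n * (2 * R) ^ n) :=
    (measure_mono fun y hy => ball_subset_closedBall hy.1.2.1).trans_eq
      (Euc.volume_closedBall z (by positivity))
  have hs : 0 < C₀ * R ^ (n - 1) := by positivity
  have hmain : (∫⁻ y in F, (‖u y‖₊ : ℝ≥0∞)) * ENNReal.ofReal (C₀ * R ^ (n - 1)) ≤
      ENNReal.ofReal (unitBallVolume n * (2 * R) ^ n) * I :=
    calc _ ≤ (∫⁻ y in F, (‖u y‖₊ : ℝ≥0∞)) * (μH[(n : ℝ) - 1]).restrict (frontier Ω) D := by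
          gcongr; exact hA.ofReal_le_measure_annulus hub hn hz hR
      _ ≤ volume F * I := setLIntegral_mul_measure_le_measure_mul_setLIntegral_essSup
          ((measurableSet_ball.inter hfr).diff (measurableSet_ball.inter hfr))
          (ne_top_of_le_ne_top ENNReal.ofReal_ne_top hvol) hFreg
      _ ≤ _ := by gcongr
  have hconst : unitBallVolume n * 2 ^ n / C₀ * R =
      unitBallVolume n * (2 * R) ^ n / (C₀ * R ^ (n - 1)) := by
    obtain ⟨m, rfl⟩ : ∃ m, n = m + 1 := ⟨n - 1, by omega⟩
    rw [Nat.add_sub_cancel]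
    field_simp
    ring
  rw [hconst, ENNReal.ofReal_div_of_pos hs, ← ENNReal.mul_div_right_comm]
  exact (ENNReal.le_div_iff_mul_le (Or.inl (ENNReal.ofReal_pos.2 hs).ne')
    (Or.inl ENNReal.ofReal_ne_top)).2 hmain

end Annulus

/-- an integral estimate over dyadic annuli in terms of truncated
nontangential maximal functions, on open sets with unbounded Ahlfors regular boundary,
with constants depending only on `n` and the Ahlfors regularity constant. -/
theorem statement2 (n : ℕ) (hn : 2 ≤ n) (C₀ : ℝ) (hC₀ : 1 < C₀) :
    ∃ C M κ' : ℝ, 0 < C ∧ 0 < M ∧ 0 < κ' ∧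
      ∀ Ω : Set (Euc n), IsOpen Ω →
        ¬ Bornology.IsBounded (frontier Ω) →
        AhlforsRegularWith n (frontier Ω) C₀ →
        ∀ z ∈ frontier Ω, ∀ u : Euc n → ℝ, Measurable u → ∀ R : ℝ, 0 < R →
          ∫⁻ y in Ω ∩ (ball z (2 * R) \ ball z R), (‖u y‖₊ : ℝ≥0∞) ∂volume ≤
            ENNReal.ofReal (C * R) *
              ∫⁻ x in (ball z (M * R) ∩ frontier Ω) \ (ball z (R / 2) ∩ frontier Ω),
                ntMaxOn Ω (collar Ω (2 * R)) κ' u x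
                ∂((μH[(n : ℝ) - 1]).restrict (frontier Ω)) := by
  have hC₀' : 0 < C₀ := one_pos.trans hC₀
  have hω := unitBallVolume_pos n
  refine ⟨unitBallVolume n * (C₀ * 2 ^ (n - 1) * 2 ^ n / 2 + 2 ^ n / C₀), 3 * C₀ ^ 2,
    4 * (3 * C₀ ^ 2 + 2), by positivity, by positivity, by positivity, ?_⟩
  intro Ω hΩ hub hA z hz u hu R hR
  have hκ : 1 ≤ 4 * (3 * C₀ ^ 2 + 2) := by nlinarith [sq_nonneg C₀]
  have hsplit : Ω ∩ (ball z (2 * R) \ ball z R) ⊆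
      Ω ∩ (ball z (2 * R) \ ball z R) ∩ {y | infDist y (frontier Ω) < R / 4} ∪
        Ω ∩ (ball z (2 * R) \ ball z R) ∩ {y | R / 4 ≤ infDist y (frontier Ω)} := fun y hy =>
    (lt_or_ge (infDist y (frontier Ω)) (R / 4)).imp (fun h => ⟨hy, h⟩) fun h => ⟨hy, h⟩
  refine (lintegral_mono_set hsplit).trans <| (lintegral_union_le _ _ _).trans <|
    (add_le_add (setLIntegral_annulus_near_le (by omega) hΩ hA hub hz hR hκ hu)
      (setLIntegral_annulus_far_le hn hA hub hz hR le_rfl u)).trans_eq ?_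
  rw [← add_mul, ← ENNReal.ofReal_add (by positivity) (by positivity)]
  ring_nf
end

section
/- Let n ≥ 2, let U ⊆ ℝⁿ ∖ {0} be an open set, and let h : U → ℝ be a C² function with Δh = 0 on U. Let U* := { x/|x|² : x ∈ U } be the image of U under the inversion x ↦ x/|x|² (so U* ⊆ ℝⁿ ∖ {0} is open). Then the Kelvin transform v : U* → ℝ defined by v(x) := |x|^{2−n} · h(x/|x|²) is C² and satisfies Δv = 0 on U*; i.e., the Kelvin transform preserves harmonicity. -/
open MeasureTheory Metric Set Filter
open scoped ENNReal NNReal Topology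

/-!
Write the Kelvin transform as the product of the radial factor `‖x‖ ^ (2 - n)` and `h ∘ ι`, where
`ι x = x / ‖x‖²`. By the product rule, `Δ(f g) = f Δg + 2 ∇f · ∇g + g Δf`, and the radial factor
is harmonic away from `0` because `Δ ‖x‖ ^ p = p (p + n - 2) ‖x‖ ^ (p - 2)`. By the chain rule,
`Δ(h ∘ ι) = ∑ᵢ D²h(∂ᵢι, ∂ᵢι) + Dh(Δι)`. The differential of `ι` at `x` is `‖x‖⁻²` times the
reflection in `x^⊥`, so the first sum is `‖x‖⁻⁴ Δh(ι x)`, while `Δι x = -2 (n - 2) ‖x‖⁻⁴ x`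
exactly cancels the cross term `2 ∇f · ∇(h ∘ ι)`. Hence `Δ(K h)(x) = ‖x‖ ^ (-n - 2) Δh(ι x)`.
-/

open scoped RealInnerProductSpace

section SecondDirectionalDerivative

variable {𝕜 : Type*} [NontriviallyNormedField 𝕜]
  {E : Type*} [NormedAddCommGroup E] [NormedSpace 𝕜 E]
  {F : Type*} [NormedAddCommGroup F] [NormedSpace 𝕜 F]
  {G : Type*} [NormedAddCommGroup G] [NormedSpace 𝕜 G]

theorem ContDiffAt.eventually_differentiableAt {f : E → F} {x : E} (hf : ContDiffAt 𝕜 2 f x) :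
    ∀ᶠ z in 𝓝 x, DifferentiableAt 𝕜 f z :=
  (hf.eventually (by simp)).mono fun _ hz => hz.differentiableAt two_ne_zero

theorem ContDiffAt.differentiableAt_fderiv {f : E → F} {x : E} (hf : ContDiffAt 𝕜 2 f x) :
    DifferentiableAt 𝕜 (fderiv 𝕜 f) x :=
  (hf.fderiv_right (m := 1) (by norm_num)).differentiableAt one_ne_zero

theorem ContDiffAt.differentiableAt_fderiv_apply {f : E → F} {x : E} (hf : ContDiffAt 𝕜 2 f x)
    (v : E) : DifferentiableAt 𝕜 (fun z => fderiv 𝕜 f z v) x :=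
  hf.differentiableAt_fderiv.clm_apply (differentiableAt_const v)

theorem fderiv_fderiv_smul_apply {f : E → 𝕜} {g : E → F} {x : E} (hf : ContDiffAt 𝕜 2 f x)
    (hg : ContDiffAt 𝕜 2 g x) (v : E) :
    fderiv 𝕜 (fun z => fderiv 𝕜 (fun y => f y • g y) z v) x v =
      f x • fderiv 𝕜 (fun z => fderiv 𝕜 g z v) x v + (2 * fderiv 𝕜 f x v) • fderiv 𝕜 g x v +
        fderiv 𝕜 (fun z => fderiv 𝕜 f z v) x v • g x := by
  have hprod : (fun z => fderiv 𝕜 (fun y => f y • g y) z v) =ᶠ[𝓝 x]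
      fun z => f z • fderiv 𝕜 g z v + fderiv 𝕜 f z v • g z := by
    filter_upwards [hf.eventually_differentiableAt, hg.eventually_differentiableAt]
      with z hfz hgz
    have hm : HasFDerivAt (fun y => f y • g y) _ z := hfz.hasFDerivAt.smul hgz.hasFDerivAt
    simp [hm.fderiv]
  have hf1 := (hf.differentiableAt two_ne_zero).hasFDerivAt
  have hg1 := (hg.differentiableAt two_ne_zero).hasFDerivAt
  have hsum : HasFDerivAt (fun z => f z • fderiv 𝕜 g z v + fderiv 𝕜 f z v • g z) _ x :=
    (hf1.smul (hg.differentiableAt_fderiv_apply v).hasFDerivAt).add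
      ((hf.differentiableAt_fderiv_apply v).hasFDerivAt.smul hg1)
  rw [hprod.fderiv_eq, hsum.fderiv]
  simp only [add_apply, smul_apply, ContinuousLinearMap.smulRight_apply]
  module

theorem fderiv_fderiv_mul_apply {f g : E → 𝕜} {x : E} (hf : ContDiffAt 𝕜 2 f x)
    (hg : ContDiffAt 𝕜 2 g x) (v : E) :
    fderiv 𝕜 (fun z => fderiv 𝕜 (fun y => f y * g y) z v) x v =
      f x * fderiv 𝕜 (fun z => fderiv 𝕜 g z v) x v + 2 * (fderiv 𝕜 f x v * fderiv 𝕜 g x v) +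
        g x * fderiv 𝕜 (fun z => fderiv 𝕜 f z v) x v := by
  simpa only [smul_eq_mul, mul_assoc, mul_comm (g x)] using fderiv_fderiv_smul_apply hf hg v

theorem fderiv_fderiv_comp_apply {h : F → G} {g : E → F} {x : E} (hh : ContDiffAt 𝕜 2 h (g x))
    (hg : ContDiffAt 𝕜 2 g x) (v : E) :
    fderiv 𝕜 (fun z => fderiv 𝕜 (h ∘ g) z v) x v =
      fderiv 𝕜 (fderiv 𝕜 h) (g x) (fderiv 𝕜 g x v) (fderiv 𝕜 g x v) +
        fderiv 𝕜 h (g x) (fderiv 𝕜 (fun z => fderiv 𝕜 g z v) x v) := by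
  have hcomp : (fun z => fderiv 𝕜 (h ∘ g) z v) =ᶠ[𝓝 x]
      fun z => fderiv 𝕜 h (g z) (fderiv 𝕜 g z v) := by
    filter_upwards [hg.continuousAt.eventually hh.eventually_differentiableAt,
      hg.eventually_differentiableAt] with z hhz hgz
    simp [fderiv_comp z hhz hgz]
  have happ : HasFDerivAt (fun z => fderiv 𝕜 h (g z) (fderiv 𝕜 g z v)) _ x :=
    (hh.differentiableAt_fderiv.hasFDerivAt.comp x
      (hg.differentiableAt two_ne_zero).hasFDerivAt).clm_apply
      (hg.differentiableAt_fderiv_apply v).hasFDerivAt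
  rw [hcomp.fderiv_eq, happ.fderiv]
  simp [add_comm]

end SecondDirectionalDerivative

section Radial

variable {E : Type*} [NormedAddCommGroup E] [InnerProductSpace ℝ E]

theorem hasFDerivAt_norm_rpow_of_ne_zero {x : E} (hx : x ≠ 0) (p : ℝ) :
    HasFDerivAt (fun y : E => ‖y‖ ^ p) ((p * ‖x‖ ^ (p - 2)) • innerSL ℝ x) x := by
  have hsq (y : E) (q : ℝ) : ‖y‖ ^ q = (‖y‖ ^ 2) ^ (q / 2) := by
    rw [← Real.rpow_natCast_mul (norm_nonneg y)]
    congr 1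
    ring
  simp_rw [hsq _ p]
  convert (hasStrictFDerivAt_norm_sq x).hasFDerivAt.rpow_const (p := p / 2)
    (Or.inl (by positivity)) using 1
  rw [hsq x, show (p - 2) / 2 = p / 2 - 1 by ring]
  ext w
  simp only [smul_apply, coe_innerSL_apply, smul_eq_mul, nsmul_eq_mul, Nat.cast_ofNat]
  ring

theorem fderiv_norm_rpow_apply {x : E} (hx : x ≠ 0) (p : ℝ) (v : E) :
    fderiv ℝ (fun y : E => ‖y‖ ^ p) x v = p * ‖x‖ ^ (p - 2) * ⟪x, v⟫ := by
  simp [(hasFDerivAt_norm_rpow_of_ne_zero hx p).fderiv, mul_assoc]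

theorem fderiv_fderiv_norm_rpow_apply {x : E} (hx : x ≠ 0) (p : ℝ) (v : E) :
    fderiv ℝ (fun z => fderiv ℝ (fun y : E => ‖y‖ ^ p) z v) x v =
      p * ((p - 2) * ‖x‖ ^ (p - 4) * ⟪x, v⟫ ^ 2 + ‖x‖ ^ (p - 2) * ‖v‖ ^ 2) := by
  have hev : (fun z => fderiv ℝ (fun y : E => ‖y‖ ^ p) z v) =ᶠ[𝓝 x]
      fun z => p * ‖z‖ ^ (p - 2) * ⟪z, v⟫ := by
    filter_upwards [isOpen_ne.mem_nhds hx] with z hz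
    exact fderiv_norm_rpow_apply hz p v
  have hinner : HasFDerivAt (fun z : E => ⟪z, v⟫) (innerSL ℝ v) x := by
    simpa [real_inner_comm] using (innerSL ℝ v).hasFDerivAt (x := x)
  have hd : HasFDerivAt (fun z : E => p * ‖z‖ ^ (p - 2) * ⟪z, v⟫) _ x :=
    ((hasFDerivAt_norm_rpow_of_ne_zero hx (p - 2)).const_mul p).mul hinner
  rw [hev.fderiv_eq, hd.fderiv]
  simp only [add_apply, smul_apply, coe_innerSL_apply, real_inner_self_eq_norm_sq, smul_eq_mul]
  ring_nf

theorem contDiffAt_norm_rpow {x : E} (hx : x ≠ 0) (p : ℝ) {k : WithTop ℕ∞} :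
    ContDiffAt ℝ k (fun y : E => ‖y‖ ^ p) x :=
  (contDiffAt_norm ℝ hx).rpow_const_of_ne (norm_ne_zero_iff.2 hx)

end Radial

section Inversion

variable {E : Type*} [NormedAddCommGroup E] [InnerProductSpace ℝ E]

noncomputable def inversion (x : E) : E := (‖x‖ ^ 2)⁻¹ • x

theorem inversion_eq_norm_rpow_smul (x : E) : inversion x = ‖x‖ ^ (-2 : ℝ) • x := by
  rw [inversion, Real.rpow_neg (norm_nonneg x), Real.rpow_two]

theorem norm_inversion (x : E) : ‖inversion x‖ = ‖x‖⁻¹ := by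
  by_cases hx : x = 0
  · simp [hx, inversion]
  · rw [inversion, norm_smul, norm_inv, norm_pow, norm_norm]
    field_simp

theorem inversion_inversion (x : E) : inversion (inversion x) = x := by
  by_cases hx : x = 0
  · simp [hx, inversion]
  · rw [inversion, norm_inversion, inversion, smul_smul, inv_pow, inv_inv,
      mul_inv_cancel₀ (by positivity), one_smul]

@[simp]
theorem inversion_eq_zero_iff {x : E} : inversion x = 0 ↔ x = 0 := by
  simp [inversion]

theorem contDiffAt_inversion {x : E} (hx : x ≠ 0) {k : WithTop ℕ∞} :
    ContDiffAt ℝ k inversion x := by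
  simp_rw [funext inversion_eq_norm_rpow_smul]
  exact (contDiffAt_norm_rpow hx _).smul contDiffAt_id

theorem fderiv_inversion_apply {x : E} (hx : x ≠ 0) (v : E) :
    fderiv ℝ inversion x v = ‖x‖ ^ (-2 : ℝ) • v - (2 * ‖x‖ ^ (-4 : ℝ) * ⟪x, v⟫) • x := by
  have hd : HasFDerivAt (fun y : E => ‖y‖ ^ (-2 : ℝ) • y) _ x :=
    (hasFDerivAt_norm_rpow_of_ne_zero hx (-2)).smul (hasFDerivAt_id x)
  rw [funext inversion_eq_norm_rpow_smul, hd.fderiv]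
  simp only [add_apply, smul_apply, ContinuousLinearMap.id_apply,
    ContinuousLinearMap.smulRight_apply, coe_innerSL_apply, smul_eq_mul]
  norm_num
  module

theorem fderiv_fderiv_inversion_apply {x : E} (hx : x ≠ 0) (v : E) :
    fderiv ℝ (fun z => fderiv ℝ inversion z v) x v =
      (8 * ‖x‖ ^ (-6 : ℝ) * ⟪x, v⟫ ^ 2 - 2 * ‖x‖ ^ (-4 : ℝ) * ‖v‖ ^ 2) • x -
        (4 * ‖x‖ ^ (-4 : ℝ) * ⟪x, v⟫) • v := by
  rw [funext inversion_eq_norm_rpow_smul, fderiv_fderiv_smul_apply (g := fun y => y)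
    (contDiffAt_norm_rpow hx _) contDiffAt_id, fderiv_norm_rpow_apply hx,
    fderiv_fderiv_norm_rpow_apply hx]
  simp only [fderiv_fun_id, ContinuousLinearMap.id_apply, fderiv_fun_const, Pi.zero_apply,
    zero_apply, smul_zero, zero_add]
  norm_num
  module

theorem fderiv_inversion_apply_self {x : E} (hx : x ≠ 0) :
    fderiv ℝ inversion x x = -‖x‖ ^ (-2 : ℝ) • x := by
  have hr : 0 < ‖x‖ := norm_pos_iff.2 hx
  rw [fderiv_inversion_apply hx, real_inner_self_eq_norm_sq]
  simp only [Real.rpow_neg hr.le, Real.rpow_ofNat]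
  match_scalars
  field_simp
  ring

end Inversion

section Euclidean

variable {n : ℕ}

theorem EuclideanSpace.sum_smul_single (x : Euc n) :
    ∑ i, x i • EuclideanSpace.single i (1 : ℝ) = x := by
  simpa using (EuclideanSpace.basisFun (Fin n) ℝ).sum_repr x

theorem ContinuousLinearMap.sum_mul_apply_single (L : Euc n →L[ℝ] ℝ) (x : Euc n) :
    ∑ i, x i * L (EuclideanSpace.single i 1) = L x := by
  simpa using congrArg L (EuclideanSpace.sum_smul_single x)

theorem laplacian_eq_sum_fderiv_fderiv {u : Euc n → ℝ} {x : Euc n}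
    (hu : DifferentiableAt ℝ (fderiv ℝ u) x) :
    laplacian u x = ∑ i, fderiv ℝ (fderiv ℝ u) x (EuclideanSpace.single i 1)
      (EuclideanSpace.single i 1) := by
  refine Finset.sum_congr rfl fun i _ => ?_
  rw [fderiv_clm_apply hu (differentiableAt_const _)]
  simp

theorem laplacian_mul {f g : Euc n → ℝ} {x : Euc n} (hf : ContDiffAt ℝ 2 f x)
    (hg : ContDiffAt ℝ 2 g x) :
    laplacian (fun y => f y * g y) x = f x * laplacian g x +
      2 * ∑ i, fderiv ℝ f x (EuclideanSpace.single i 1) * fderiv ℝ g x (EuclideanSpace.single i 1) +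
        g x * laplacian f x := by
  simp only [laplacian, fderiv_fderiv_mul_apply hf hg, Finset.sum_add_distrib, Finset.mul_sum]

theorem laplacian_comp {F : Type*} [NormedAddCommGroup F] [NormedSpace ℝ F] {h : F → ℝ}
    {g : Euc n → F} {x : Euc n} (hh : ContDiffAt ℝ 2 h (g x)) (hg : ContDiffAt ℝ 2 g x) :
    laplacian (h ∘ g) x =
      ∑ i, fderiv ℝ (fderiv ℝ h) (g x) (fderiv ℝ g x (EuclideanSpace.single i 1))
        (fderiv ℝ g x (EuclideanSpace.single i 1)) +
      fderiv ℝ h (g x) (∑ i, fderiv ℝ (fun z => fderiv ℝ g z (EuclideanSpace.single i 1)) x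
        (EuclideanSpace.single i 1)) := by
  simp only [laplacian, fderiv_fderiv_comp_apply hh hg, Finset.sum_add_distrib, map_sum]

theorem laplacian_norm_rpow {x : Euc n} (hx : x ≠ 0) (p : ℝ) :
    laplacian (fun y : Euc n => ‖y‖ ^ p) x = p * (p + n - 2) * ‖x‖ ^ (p - 2) := by
  have hr : 0 < ‖x‖ := norm_pos_iff.2 hx
  have hsq : ∑ i, x i ^ 2 = ‖x‖ ^ 2 := (EuclideanSpace.real_norm_sq_eq x).symm
  simp only [laplacian, fderiv_fderiv_norm_rpow_apply hx, EuclideanSpace.inner_single_right,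
    conj_trivial, one_mul, PiLp.norm_single, norm_one, one_pow, mul_one, ← Finset.mul_sum,
    Finset.sum_add_distrib, hsq, Finset.sum_const, Finset.card_univ, Fintype.card_fin, nsmul_eq_mul]
  rw [show p - 4 = (p - 2) - 2 by ring, Real.rpow_sub hr (p - 2), Real.rpow_two]
  field_simp
  ring

theorem sum_fderiv_fderiv_inversion {x : Euc n} (hx : x ≠ 0) :
    ∑ i, fderiv ℝ (fun z => fderiv ℝ inversion z (EuclideanSpace.single i 1)) x
      (EuclideanSpace.single i 1) = (-2 * ((n : ℝ) - 2) * ‖x‖ ^ (-4 : ℝ)) • x := by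
  have hr : 0 < ‖x‖ := norm_pos_iff.2 hx
  have hsq : ∑ i, x i ^ 2 = ‖x‖ ^ 2 := (EuclideanSpace.real_norm_sq_eq x).symm
  simp only [fderiv_fderiv_inversion_apply hx, EuclideanSpace.inner_single_right, conj_trivial,
    one_mul, PiLp.norm_single, norm_one, one_pow, mul_one, Finset.sum_sub_distrib,
    ← Finset.sum_smul, mul_smul, ← Finset.smul_sum, ← Finset.mul_sum, hsq, Finset.sum_const,
    Finset.card_univ, Fintype.card_fin, nsmul_eq_mul, EuclideanSpace.sum_smul_single,
    Real.rpow_neg hr.le, Real.rpow_ofNat]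
  match_scalars
  field_simp
  ring

theorem sum_apply_fderiv_inversion (B : Euc n →L[ℝ] Euc n →L[ℝ] ℝ) {x : Euc n} (hx : x ≠ 0) :
    ∑ i, B (fderiv ℝ inversion x (EuclideanSpace.single i 1))
      (fderiv ℝ inversion x (EuclideanSpace.single i 1)) =
      ‖x‖ ^ (-4 : ℝ) * ∑ i, B (EuclideanSpace.single i 1) (EuclideanSpace.single i 1) := by
  have hr : 0 < ‖x‖ := norm_pos_iff.2 hx
  have hsq : ∑ i, x i ^ 2 = ‖x‖ ^ 2 := (EuclideanSpace.real_norm_sq_eq x).symm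
  have hterm (i : Fin n) : B (fderiv ℝ inversion x (EuclideanSpace.single i 1))
      (fderiv ℝ inversion x (EuclideanSpace.single i 1)) =
      (‖x‖ ^ (-2 : ℝ)) ^ 2 * B (EuclideanSpace.single i 1) (EuclideanSpace.single i 1) -
        2 * ‖x‖ ^ (-2 : ℝ) * ‖x‖ ^ (-4 : ℝ) * (x i * B.flip x (EuclideanSpace.single i 1)) -
        2 * ‖x‖ ^ (-2 : ℝ) * ‖x‖ ^ (-4 : ℝ) * (x i * B x (EuclideanSpace.single i 1)) +
        4 * (‖x‖ ^ (-4 : ℝ)) ^ 2 * x i ^ 2 * B x x := by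
    simp only [fderiv_inversion_apply hx, EuclideanSpace.inner_single_right, map_sub, map_smul,
      sub_apply, smul_apply, smul_eq_mul, ContinuousLinearMap.flip_apply, conj_trivial, one_mul]
    ring
  simp only [hterm, Finset.sum_add_distrib, Finset.sum_sub_distrib, ← Finset.mul_sum,
    ← Finset.sum_mul, ContinuousLinearMap.sum_mul_apply_single, hsq]
  simp only [ContinuousLinearMap.flip_apply, Real.rpow_neg hr.le, Real.rpow_ofNat]
  field_simp
  ring

end Euclidean

section Kelvin

variable {n : ℕ}

noncomputable def kelvinTransform (h : Euc n → ℝ) (y : Euc n) : ℝ :=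
  ‖y‖ ^ ((2 : ℝ) - n) * h (inversion y)

theorem contDiffAt_kelvinTransform {h : Euc n → ℝ} {x : Euc n} (hx : x ≠ 0)
    (hh : ContDiffAt ℝ 2 h (inversion x)) : ContDiffAt ℝ 2 (kelvinTransform h) x :=
  (contDiffAt_norm_rpow hx _).mul (hh.comp x (contDiffAt_inversion hx))

theorem laplacian_kelvinTransform {h : Euc n → ℝ} {x : Euc n} (hx : x ≠ 0)
    (hh : ContDiffAt ℝ 2 h (inversion x)) :
    laplacian (kelvinTransform h) x = ‖x‖ ^ (-(n : ℝ) - 2) * laplacian h (inversion x) := by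
  have hr : 0 < ‖x‖ := norm_pos_iff.2 hx
  have hι : ContDiffAt ℝ 2 inversion x := contDiffAt_inversion hx
  have hcross : ∑ i, fderiv ℝ (fun y : Euc n => ‖y‖ ^ ((2 : ℝ) - n)) x (EuclideanSpace.single i 1) *
      fderiv ℝ (h ∘ inversion) x (EuclideanSpace.single i 1) =
      ((2 : ℝ) - n) * ‖x‖ ^ ((2 : ℝ) - n - 2) * fderiv ℝ h (inversion x) (-‖x‖ ^ (-2 : ℝ) • x) := by
    simp only [fderiv_norm_rpow_apply hx, EuclideanSpace.inner_single_right, conj_trivial,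
      one_mul, mul_assoc, ← Finset.mul_sum, ContinuousLinearMap.sum_mul_apply_single]
    rw [fderiv_comp x (hh.differentiableAt two_ne_zero) (hι.differentiableAt two_ne_zero)]
    simp only [ContinuousLinearMap.coe_comp, Function.comp_apply, fderiv_inversion_apply_self hx]
  rw [show kelvinTransform h = fun y => ‖y‖ ^ ((2 : ℝ) - n) * (h ∘ inversion) y from rfl,
    laplacian_mul (contDiffAt_norm_rpow hx _) (hh.comp x hι), hcross, laplacian_comp hh hι,
    laplacian_norm_rpow hx, sum_apply_fderiv_inversion _ hx, sum_fderiv_fderiv_inversion hx,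
    ← laplacian_eq_sum_fderiv_fderiv hh.differentiableAt_fderiv]
  simp only [map_smul, smul_eq_mul, Function.comp_apply]
  have e1 : ‖x‖ ^ ((2 : ℝ) - n - 2) = ‖x‖ ^ ((2 : ℝ) - n) * ‖x‖ ^ (-2 : ℝ) := by
    rw [← Real.rpow_add hr]; ring_nf
  have e2 : ‖x‖ ^ (-(n : ℝ) - 2) = ‖x‖ ^ ((2 : ℝ) - n) * ‖x‖ ^ (-4 : ℝ) := by
    rw [← Real.rpow_add hr]; ring_nf
  have e3 : ‖x‖ ^ (-4 : ℝ) = ‖x‖ ^ (-2 : ℝ) * ‖x‖ ^ (-2 : ℝ) := by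
    rw [← Real.rpow_add hr]; norm_num
  rw [e1, e2, e3]
  ring

end Kelvin

theorem statement7_general (n : ℕ) (U : Set (Euc n)) (hUo : IsOpen U)
    (hU0 : (0 : Euc n) ∉ U)
    (h : Euc n → ℝ) (hh : ContDiffOn ℝ 2 h U) (hharm : ∀ x ∈ U, laplacian h x = 0) :
    ContDiffOn ℝ 2 (fun y : Euc n => ‖y‖ ^ ((2 : ℝ) - n) * h ((‖y‖ ^ 2)⁻¹ • y))
      ((fun x : Euc n => (‖x‖ ^ 2)⁻¹ • x) '' U) ∧
    ∀ x ∈ (fun x : Euc n => (‖x‖ ^ 2)⁻¹ • x) '' U,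
      laplacian (fun y : Euc n => ‖y‖ ^ ((2 : ℝ) - n) * h ((‖y‖ ^ 2)⁻¹ • y)) x = 0 := by
  show ContDiffOn ℝ 2 (kelvinTransform h) (inversion '' U) ∧
    ∀ x ∈ inversion '' U, laplacian (kelvinTransform h) x = 0
  have hU : ∀ x ∈ inversion '' U, x ≠ 0 ∧ ContDiffAt ℝ 2 h (inversion x) := by
    rintro _ ⟨y, hy, rfl⟩
    refine ⟨inversion_eq_zero_iff.not.2 (ne_of_mem_of_not_mem hy hU0), ?_⟩
    rw [inversion_inversion]
    exact hh.contDiffAt (hUo.mem_nhds hy)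
  refine ⟨fun x hx => (contDiffAt_kelvinTransform (hU x hx).1 (hU x hx).2).contDiffWithinAt,
    fun x hx => ?_⟩
  obtain ⟨hx0, hhx⟩ := hU x hx
  obtain ⟨y, hy, rfl⟩ := hx
  rw [laplacian_kelvinTransform hx0 hhx, inversion_inversion, hharm y hy, mul_zero]

/-- the Kelvin transform preserves harmonicity: if `h` is harmonic on an
open set `U ⊆ ℝⁿ ∖ {0}`, then `v(x) = |x|^{2-n} h(x/|x|²)` is harmonic on the image of
`U` under the inversion `x ↦ x/|x|²`. -/
theorem statement7 (n : ℕ) (hn : 2 ≤ n) (U : Set (Euc n)) (hUo : IsOpen U)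
    (hU0 : (0 : Euc n) ∉ U)
    (h : Euc n → ℝ) (hh : ContDiffOn ℝ 2 h U) (hharm : ∀ x ∈ U, laplacian h x = 0) :
    ContDiffOn ℝ 2 (fun y : Euc n => ‖y‖ ^ ((2 : ℝ) - n) * h ((‖y‖ ^ 2)⁻¹ • y))
      ((fun x : Euc n => (‖x‖ ^ 2)⁻¹ • x) '' U) ∧
    ∀ x ∈ (fun x : Euc n => (‖x‖ ^ 2)⁻¹ • x) '' U,
      laplacian (fun y : Euc n => ‖y‖ ^ ((2 : ℝ) - n) * h ((‖y‖ ^ 2)⁻¹ • y)) x = 0 :=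
  statement7_general n U hUo hU0 h hh hharm
end

section
/- Let n ∈ ℕ and let Ω be an open, nonempty, proper subset of ℝⁿ whose boundary ∂Ω is an Ahlfors regular set. Then ℋ^{n−1}(∂*Ω ∖ ∂_nta Ω) = 0, where ∂*Ω is the measure-theoretic boundary of Ω and ∂_nta Ω := { x ∈ ∂Ω : x belongs to the closure of Γ_κ(x) for every κ > 0 } is the nontangentially accessible boundary. -/
open MeasureTheory Metric Set Filter
open scoped ENNReal NNReal Topology

/-!
A point of `∂Ω` outside `∂_nta Ω` lies, for some rational `κ, ρ > 0`, in the set `E` of boundary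
points whose region `Γ_κ(x)` stays at distance at least `ρ` from `x`, so it suffices to show that
`E ∩ ∂*Ω` is `ℋ^{n-1}`-null. At `x ∈ E ∩ ∂*Ω` the set `Ω` has positive upper density. By Ahlfors
regularity the part of `B(x, r)` within distance `c r` of `∂Ω` has volume `≲ c rⁿ`, so there are
arbitrarily small `r` and corkscrew points `y ∈ Ω ∩ B(x, r)` with `dist(y, ∂Ω) ≥ c r`. The boundary
points close to the point of `∂Ω` nearest to `y` see `y` nontangentially, hence lie outside `E`,
and by Ahlfors regularity they carry a fixed fraction of `ℋ^{n-1}(∂Ω ∩ B(x, 3r))`. Thus `E ∩ ∂*Ω`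
has density `< 1` at each of its points for `ℋ^{n-1}` restricted to `∂Ω`, and the
Lebesgue–Besicovitch density theorem makes it null.
-/

theorem mem_closure_of_limsup_measure_inter_ball_pos {X : Type*} [PseudoMetricSpace X]
    [MeasurableSpace X] {μ : Measure X} {g : ℝ → ℝ≥0∞} {S : Set X} {x : X}
    (h : 0 < limsup (fun r => μ (S ∩ ball x r) / g r) (𝓝[>] 0)) :
    x ∈ closure S := by
  refine Metric.mem_closure_iff.mpr fun ε hε => ?_
  have hsmall : ∀ᶠ r in 𝓝[>] (0 : ℝ), r < ε :=
    (eventually_lt_nhds hε).filter_mono nhdsWithin_le_nhds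
  obtain ⟨r, hpos, hrε⟩ := ((frequently_lt_of_lt_limsup (by isBoundedDefault) h).and_eventually
    hsmall).exists
  obtain ⟨y, hyS, hyx⟩ : (S ∩ ball x r).Nonempty :=
    nonempty_of_measure_ne_zero (ENNReal.div_pos_iff.mp hpos).1
  exact ⟨y, hyS, (dist_comm x y).trans_lt ((mem_ball.mp hyx).trans hrε)⟩

theorem measure_eq_zero_of_frequently_le_mul {X : Type*} [MetricSpace X] [MeasurableSpace X]
    [BorelSpace X] [SecondCountableTopology X] [HasBesicovitchCovering X] (μ : Measure X)
    [IsLocallyFiniteMeasure μ] {E : Set X}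
    (h : ∀ x ∈ E, ∃ e < 1, ∃ᶠ r in 𝓝[>] (0 : ℝ),
      μ (E ∩ closedBall x r) ≤ e * μ (closedBall x r)) :
    μ E = 0 := by
  rw [← Measure.restrict_apply_self]
  refine measure_mono_null (fun x hx => ?_)
    (ae_iff.mp (Besicovitch.ae_tendsto_measure_inter_div μ E))
  intro hT
  obtain ⟨e, he, hfreq⟩ := h x hx
  obtain ⟨r, hle, hlt⟩ := (hfreq.and_eventually (hT.eventually (lt_mem_nhds he))).exists
  exact hlt.not_ge (ENNReal.div_le_of_le_mul hle)

theorem measure_inter_le_one_sub_mul {X : Type*} [MeasurableSpace X] {μ : Measure X}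
    {E B G : Set X} {e : ℝ≥0∞} (hGB : G ⊆ B) (hG : NullMeasurableSet G μ) (hEG : Disjoint E G)
    (hB : μ B ≠ ∞) (he : e * μ B ≤ μ G) :
    μ (E ∩ B) ≤ (1 - e) * μ B :=
  calc μ (E ∩ B) ≤ μ (B \ G) :=
        measure_mono fun x hx => ⟨hx.2, hEG.notMem_of_mem_left hx.1⟩
    _ = μ B - μ G := measure_sdiff hGB hG (measure_ne_top_of_subset hGB hB)
    _ ≤ μ B - e * μ B := tsub_le_tsub_left he _
    _ = (1 - e) * μ B := by rw [ENNReal.sub_mul fun _ _ => hB, one_mul]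

theorem exists_pos_forall_ofReal_lt_two_mul_ediam {X : Type*} [PseudoMetricSpace X]
    {S : Set X} (hS : ediam S ≠ 0) :
    ∃ R > 0, ∀ s ≤ R, ENNReal.ofReal s < 2 * ediam S := by
  obtain ⟨R, -, hR0, hR⟩ := ENNReal.lt_iff_exists_real_btwn.mp (pos_iff_ne_zero.mpr hS)
  refine ⟨R, ENNReal.ofReal_pos.mp hR0, fun s hs => ?_⟩
  calc ENNReal.ofReal s ≤ ENNReal.ofReal R := ENNReal.ofReal_le_ofReal hs
    _ < ediam S := hR
    _ ≤ 2 * ediam S := le_mul_of_one_le_left' one_le_two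

theorem ball_infDist_frontier_subset {E : Type*} [NormedAddCommGroup E] [NormedSpace ℝ E]
    [FiniteDimensional ℝ E] {s : Set E} {y : E} (hy : y ∈ s) :
    ball y (infDist y (frontier s)) ⊆ s := by
  rcases eq_or_ne s univ with rfl | hs
  · exact subset_univ _
  obtain ⟨z, hz, hyz⟩ := exists_mem_frontier_infDist_compl_eq_dist hy hs
  exact (ball_subset_ball (hyz ▸ infDist_le_dist_of_mem hz)).trans ball_infDist_compl_subset

namespace AhlforsRegularWith

variable {n : ℕ} {Sig : Set (Euc n)} {C : ℝ}

theorem isLocallyFiniteMeasure_restrict (hAR : AhlforsRegularWith n Sig C)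
    (hD : ediam Sig ≠ 0) : IsLocallyFiniteMeasure (μH[(n : ℝ) - 1].restrict Sig) := by
  obtain ⟨R, hR0, hR⟩ := exists_pos_forall_ofReal_lt_two_mul_ediam hD
  refine ⟨fun x => ?_⟩
  by_cases hx : x ∈ Sig
  · refine ⟨ball x R, ball_mem_nhds x hR0, ?_⟩
    rw [Measure.restrict_apply' hAR.2.1.measurableSet, inter_comm]
    exact (hAR.2.2 x hx R hR0 (hR R le_rfl)).2.trans_lt ENNReal.ofReal_lt_top
  · refine ⟨Sigᶜ, hAR.2.1.isOpen_compl.mem_nhds hx, ?_⟩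
    simp [Measure.restrict_apply' hAR.2.1.measurableSet]

theorem volume_closedBall_le (hn : 1 ≤ n) (hAR : AhlforsRegularWith n Sig C) {b : Euc n}
    (hb : b ∈ Sig) {s : ℝ} (hs : 0 < s) (hsD : ENNReal.ofReal s < 2 * ediam Sig)
    {τ : ℝ} (hτ : 0 ≤ τ) :
    volume (closedBall b (τ * s)) ≤ volume (ball (0 : Euc n) 1) *
      ENNReal.ofReal (τ ^ n * C * s) * μH[(n : ℝ) - 1] (Sig ∩ closedBall b s) := by
  have hC : 0 < C := one_pos.trans hAR.1
  calc volume (closedBall b (τ * s))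
      = volume (ball (0 : Euc n) 1) *
          (ENNReal.ofReal (τ ^ n * C * s) * ENNReal.ofReal (C⁻¹ * s ^ (n - 1))) := by
        rw [Measure.addHaar_closedBall volume b (by positivity), finrank_euclideanSpace_fin,
          ← ENNReal.ofReal_mul (by positivity), mul_comm, mul_pow, ← pow_sub_one_mul (by omega) s]
        congr 2
        field_simp
    _ ≤ volume (ball (0 : Euc n) 1) *
          (ENNReal.ofReal (τ ^ n * C * s) * μH[(n : ℝ) - 1] (Sig ∩ ball b s)) := by
        gcongr
        exact (hAR.2.2 b hb s hs hsD).1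
    _ ≤ _ := by
        rw [← mul_assoc]
        gcongr
        exact ball_subset_closedBall

theorem volume_biUnion_closedBall_le (hn : 1 ≤ n) (hAR : AhlforsRegularWith n Sig C)
    {A : Set (Euc n)} (hA : A ⊆ Sig) {s : ℝ} (hs : 0 < s)
    (hsD : ENNReal.ofReal s < 2 * ediam Sig) :
    volume (⋃ z ∈ A, closedBall z s) ≤ volume (ball (0 : Euc n) 1) *
      ENNReal.ofReal (5 ^ n * C * s) * μH[(n : ℝ) - 1] (Sig ∩ ⋃ z ∈ A, closedBall z s) := by
  obtain ⟨u, huA, hdisj, hcover⟩ :=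
    Vitali.exists_disjoint_subfamily_covering_enlargement_closedBall A id (fun _ => s) s
      (fun _ _ => le_rfl) 5 (by norm_num)
  have hu : u.Countable := (hdisj.mono fun _ => ball_subset_closedBall).countable_of_isOpen
    (fun _ _ => isOpen_ball) (fun _ _ => nonempty_ball.mpr hs)
  calc volume (⋃ z ∈ A, closedBall z s)
      ≤ volume (⋃ b ∈ u, closedBall b (5 * s)) := by
        refine measure_mono (iUnion₂_subset fun z hz => ?_)
        obtain ⟨b, hb, hzb⟩ := hcover z hz
        exact hzb.trans (subset_biUnion_of_mem (u := fun b => closedBall b (5 * s)) hb)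
    _ ≤ ∑' b : u, volume (closedBall (b : Euc n) (5 * s)) := measure_biUnion_le _ hu _
    _ ≤ ∑' b : u, volume (ball (0 : Euc n) 1) * ENNReal.ofReal (5 ^ n * C * s) *
          μH[(n : ℝ) - 1] (Sig ∩ closedBall (b : Euc n) s) :=
        ENNReal.tsum_le_tsum fun b => hAR.volume_closedBall_le hn (hA (huA b.2)) hs hsD
          (by norm_num)
    _ = volume (ball (0 : Euc n) 1) * ENNReal.ofReal (5 ^ n * C * s) *
          μH[(n : ℝ) - 1] (⋃ b ∈ u, Sig ∩ closedBall b s) := by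
        rw [ENNReal.tsum_mul_left, measure_biUnion (f := fun b => Sig ∩ closedBall b s) hu
          (hdisj.mono fun _ => inter_subset_right)
          fun _ _ => hAR.2.1.measurableSet.inter measurableSet_closedBall]
    _ ≤ _ := by
        gcongr
        exact iUnion₂_subset fun b hb =>
          inter_subset_inter_right _
            (subset_biUnion_of_mem (u := fun z => closedBall z s) (huA hb))

theorem volume_ball_inter_thickening_le (hn : 1 ≤ n) (hAR : AhlforsRegularWith n Sig C)
    {x : Euc n} (hx : x ∈ Sig) {r s : ℝ} (hs : 0 < s) (hsr : s ≤ r)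
    (hrD : ENNReal.ofReal (4 * r) < 2 * ediam Sig) :
    volume (ball x r ∩ thickening s Sig) ≤ ENNReal.ofReal
      ((volume (ball (0 : Euc n) 1)).toReal * 5 ^ n * 4 ^ (n - 1) * C ^ 2 * s * r ^ (n - 1)) := by
  have hC : 0 < C := one_pos.trans hAR.1
  set A := Sig ∩ ball x (2 * r)
  have hcover : ball x r ∩ thickening s Sig ⊆ ⋃ z ∈ A, closedBall z s := by
    rintro y ⟨hyx, hy⟩
    obtain ⟨z, hz, hyz⟩ := mem_thickening_iff.mp hy
    refine mem_biUnion ⟨hz, mem_ball.mpr ?_⟩ (mem_closedBall.mpr hyz.le)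
    linarith [mem_ball.mp hyx, dist_triangle z y x, dist_comm z y]
  have hnear : Sig ∩ ⋃ z ∈ A, closedBall z s ⊆ Sig ∩ ball x (4 * r) := by
    rintro w ⟨hw, hwA⟩
    obtain ⟨z, ⟨-, hzx⟩, hwz⟩ := mem_iUnion₂.mp hwA
    refine ⟨hw, mem_ball.mpr ?_⟩
    linarith [mem_ball.mp hzx, mem_closedBall.mp hwz, dist_triangle w z x]
  calc volume (ball x r ∩ thickening s Sig)
      ≤ volume (⋃ z ∈ A, closedBall z s) := measure_mono hcover
    _ ≤ volume (ball (0 : Euc n) 1) * ENNReal.ofReal (5 ^ n * C * s) *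
          μH[(n : ℝ) - 1] (Sig ∩ ⋃ z ∈ A, closedBall z s) :=
        hAR.volume_biUnion_closedBall_le hn inter_subset_left hs
          ((ENNReal.ofReal_le_ofReal (by linarith)).trans_lt hrD)
    _ ≤ volume (ball (0 : Euc n) 1) * ENNReal.ofReal (5 ^ n * C * s) *
          ENNReal.ofReal (C * (4 * r) ^ (n - 1)) := by
        gcongr
        exact (measure_mono hnear).trans (hAR.2.2 x hx _ (by linarith) hrD).2
    _ = _ := by
        conv_lhs => rw [← ENNReal.ofReal_toReal measure_ball_lt_top.ne]
        rw [← ENNReal.ofReal_mul (by positivity), ← ENNReal.ofReal_mul (by positivity), mul_pow]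
        ring_nf

theorem le_measure_inter_ball (hAR : AhlforsRegularWith n Sig C) {x z : Euc n} (hx : x ∈ Sig)
    (hz : z ∈ Sig) {s t : ℝ} (hs : 0 < s) (hst : s ≤ t)
    (htD : ENNReal.ofReal t < 2 * ediam Sig) :
    ENNReal.ofReal (C⁻¹ ^ 2 * (s / t) ^ (n - 1)) * μH[(n : ℝ) - 1] (Sig ∩ ball x t) ≤
      μH[(n : ℝ) - 1] (Sig ∩ ball z s) := by
  have hC : 0 < C := one_pos.trans hAR.1
  have ht : 0 < t := hs.trans_le hst
  calc ENNReal.ofReal (C⁻¹ ^ 2 * (s / t) ^ (n - 1)) * μH[(n : ℝ) - 1] (Sig ∩ ball x t)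
      ≤ ENNReal.ofReal (C⁻¹ ^ 2 * (s / t) ^ (n - 1)) * ENNReal.ofReal (C * t ^ (n - 1)) := by
        gcongr
        exact (hAR.2.2 x hx t ht htD).2
    _ = ENNReal.ofReal (C⁻¹ * s ^ (n - 1)) := by
        rw [← ENNReal.ofReal_mul (by positivity), div_pow]
        congr 1
        field_simp
    _ ≤ _ := (hAR.2.2 z hz s hs ((ENNReal.ofReal_le_ofReal hst).trans_lt htD)).1

theorem exists_corkscrew (hn : 1 ≤ n) (hAR : AhlforsRegularWith n Sig C) {δ : ℝ} (hδ : 0 < δ) :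
    ∃ c : ℝ, 0 < c ∧ ∀ x ∈ Sig, ∀ r : ℝ, 0 < r →
      ENNReal.ofReal (4 * r) < 2 * ediam Sig → ∀ S : Set (Euc n),
      ENNReal.ofReal (δ * r ^ n) < volume (S ∩ ball x r) →
      ∃ y ∈ S, dist x y < r ∧ c * r ≤ infDist y Sig := by
  set K := (volume (ball (0 : Euc n) 1)).toReal * 5 ^ n * 4 ^ (n - 1) * C ^ 2
  have hK : 0 ≤ K := by positivity
  set c := min 1 (δ / (K + 1))
  have hc : 0 < c := lt_min one_pos (by positivity)
  have hKc : K * c < δ := calc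
    K * c ≤ K * (δ / (K + 1)) := mul_le_mul_of_nonneg_left (min_le_right _ _) hK
    _ < δ := by rw [mul_div_assoc', div_lt_iff₀ (by positivity)]; nlinarith
  refine ⟨c, hc, fun x hx r hr hrD S hS => ?_⟩
  by_contra! hfar
  have hnear : S ∩ ball x r ⊆ ball x r ∩ thickening (c * r) Sig := fun y ⟨hyS, hyx⟩ =>
    ⟨hyx, (mem_thickening_iff_infDist_lt ⟨x, hx⟩).mpr (hfar y hyS (mem_ball'.mp hyx))⟩
  refine hS.not_ge ((measure_mono hnear).trans ((hAR.volume_ball_inter_thickening_le hn hx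
    (by positivity) (mul_le_of_le_one_left hr.le (min_le_left _ _)) hrD).trans
    (ENNReal.ofReal_le_ofReal ?_)))
  have hpow : r ^ n = r ^ (n - 1) * r := (pow_sub_one_mul (by omega) r).symm
  calc K * (c * r) * r ^ (n - 1) = K * c * r ^ n := by rw [hpow]; ring
    _ ≤ δ * r ^ n := by gcongr

end AhlforsRegularWith

section Accessibility

variable {n : ℕ} {Ω : Set (Euc n)}

theorem mtBoundary_subset_frontier : mtBoundary n Ω ⊆ frontier Ω :=
  fun _ hx => by
    rw [frontier_eq_closure_inter_closure]
    exact ⟨mem_closure_of_limsup_measure_inter_ball_pos hx.1,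
      mem_closure_of_limsup_measure_inter_ball_pos hx.2⟩

theorem ntRegion_mono {κ κ' : ℝ} (h : κ ≤ κ') (x : Euc n) :
    ntRegion Ω κ x ⊆ ntRegion Ω κ' x := fun _ ⟨hy, hxy⟩ =>
  ⟨hy, hxy.trans_le (mul_le_mul_of_nonneg_right (by linarith) infDist_nonneg)⟩

theorem exists_mem_ntRegion_dist_lt {q : ℝ} (hq : 0 ≤ q) {y z : Euc n} (hy : y ∈ Ω)
    (hz : z ∈ frontier Ω) (hzy : dist z y < (1 + q / 2) * infDist y (frontier Ω)) :
    ∃ w ∈ ntRegion Ω q z, dist z w < dist z y := by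
  rw [dist_comm z y] at hzy ⊢
  set d := infDist y (frontier Ω)
  set s := dist y z
  have hds : d ≤ s := infDist_le_dist_of_mem hz
  have hd : 0 < d := by nlinarith [dist_nonneg (x := y) (y := z)]
  have hs : 0 < s := hd.trans_le hds
  set w := AffineMap.lineMap y z (d / (4 * s))
  have hwy : dist w y = d / 4 := by
    rw [dist_lineMap_left, Real.norm_of_nonneg (by positivity)]
    show d / (4 * s) * s = d / 4
    field_simp
  have hwz : dist z w = s - d / 4 := by
    rw [dist_comm, dist_lineMap_right, Real.norm_of_nonneg]
    · field_simp
      ring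
    · rw [sub_nonneg, div_le_one (by positivity)]
      linarith
  have hwΩ : w ∈ Ω := ball_infDist_frontier_subset hy (mem_ball.mpr (by linarith))
  have hdw : 3 * d / 4 ≤ infDist w (frontier Ω) := by
    linarith [infDist_le_infDist_add_dist (x := y) (y := w) (s := frontier Ω), dist_comm w y]
  refine ⟨w, ⟨hwΩ, ?_⟩, by linarith⟩
  calc dist z w < (3 / 4 + q / 2) * d := by linarith
    _ ≤ (1 + q) * (3 * d / 4) := by nlinarith
    _ ≤ (1 + q) * infDist w (frontier Ω) := by gcongr

theorem mtBoundary_subset_ntaBoundary_of_subsingleton (hΩ : IsOpen Ω)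
    (hF : (frontier Ω).Subsingleton) :
    mtBoundary n Ω ⊆ ntaBoundary n Ω := by
  intro x hx
  have hxF := mtBoundary_subset_frontier hx
  have hxΩ : x ∉ Ω := (hΩ.frontier_eq ▸ hxF).2
  refine ⟨hxF, fun κ hκ => Metric.mem_closure_iff.mpr fun ε hε => ?_⟩
  obtain ⟨y, hy, hxy⟩ :=
    Metric.mem_closure_iff.mp (mem_closure_of_limsup_measure_inter_ball_pos hx.1) ε hε
  have hxy0 : 0 < dist x y := dist_pos.mpr fun h => hxΩ (h ▸ hy)
  have hyF : infDist y (frontier Ω) = dist x y := by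
    rw [hF.eq_singleton_of_mem hxF, infDist_singleton, dist_comm]
  exact ⟨y, ⟨hy, by rw [hyF]; nlinarith⟩, hxy⟩

def ntInaccessible (Ω : Set (Euc n)) (κ ρ : ℝ) : Set (Euc n) :=
  {x | ∀ w ∈ ntRegion Ω κ x, ρ ≤ dist x w}

theorem ntInaccessible_disjoint_ball_inter_frontier {q ρ : ℝ} (hq : 0 ≤ q) {y z₀ : Euc n}
    (hy : y ∈ Ω) (hyz₀ : infDist y (frontier Ω) = dist y z₀)
    (hρ : (1 + q / 2) * infDist y (frontier Ω) ≤ ρ) :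
    Disjoint (ntInaccessible Ω q ρ) (ball z₀ (q / 2 * infDist y (frontier Ω)) ∩ frontier Ω) := by
  refine disjoint_right.mpr fun z ⟨hzz₀, hz⟩ hzE => ?_
  have hzy : dist z y < (1 + q / 2) * infDist y (frontier Ω) := by
    linarith [dist_triangle z z₀ y, dist_comm z₀ y, mem_ball.mp hzz₀]
  obtain ⟨w, hw, hzw⟩ := exists_mem_ntRegion_dist_lt hq hy hz hzy
  linarith [hzE w hw]

theorem mtBoundary_diff_ntaBoundary_subset :
    mtBoundary n Ω \ ntaBoundary n Ω ⊆ ⋃ m : ℕ, ⋃ l : ℕ,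
      mtBoundary n Ω ∩ ntInaccessible Ω (1 / ((m : ℝ) + 1)) (1 / ((l : ℝ) + 1)) := by
  rintro x ⟨hx, hnta⟩
  obtain ⟨κ, hκ, hcl⟩ : ∃ κ > 0, x ∉ closure (ntRegion Ω κ x) := by
    by_contra! h
    exact hnta ⟨mtBoundary_subset_frontier hx, h⟩
  obtain ⟨ε, hε, hfar⟩ : ∃ ε > 0, ∀ w ∈ ntRegion Ω κ x, ε ≤ dist x w := by
    simpa [Metric.mem_closure_iff] using hcl
  obtain ⟨m, hm⟩ := exists_nat_one_div_lt hκ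
  obtain ⟨l, hl⟩ := exists_nat_one_div_lt hε
  exact mem_iUnion₂.mpr
    ⟨m, l, hx, fun w hw => hl.le.trans (hfar w (ntRegion_mono hm.le x hw))⟩

end Accessibility

section StrataNull

variable {n : ℕ} {Ω : Set (Euc n)} {C q ρ : ℝ}

theorem measure_ntInaccessible_inter_closedBall_le (hAR : AhlforsRegularWith n (frontier Ω) C)
    (hq0 : 0 < q) (hq1 : q ≤ 1) {c r : ℝ} (hc : 0 < c) (hr : 0 < r) (hrρ : 2 * r ≤ ρ)
    (hrD : ENNReal.ofReal (4 * r) < 2 * ediam (frontier Ω)) {x y : Euc n}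
    (hx : x ∈ frontier Ω) (hy : y ∈ Ω) (hxy : dist x y < r)
    (hcy : c * r ≤ infDist y (frontier Ω)) :
    μH[(n : ℝ) - 1].restrict (frontier Ω) (ntInaccessible Ω q ρ ∩ closedBall x (3 * r)) ≤
      (1 - ENNReal.ofReal (C⁻¹ ^ 2 * (q * c / 8) ^ (n - 1))) *
        μH[(n : ℝ) - 1].restrict (frontier Ω) (closedBall x (3 * r)) := by
  have hF := hAR.2.1
  set d := infDist y (frontier Ω)
  obtain ⟨z₀, hz₀, hyz₀⟩ := hF.exists_infDist_eq_dist ⟨x, hx⟩ y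
  have hdr : d < r := (infDist_le_dist_of_mem hx).trans_lt (dist_comm y x ▸ hxy)
  have hqd : q * d ≤ d := mul_le_of_le_one_left infDist_nonneg hq1
  have hcrd : q / 2 * (c * r) ≤ q / 2 * d := by gcongr
  set G := ball z₀ (q / 2 * (c * r)) ∩ frontier Ω
  have hGB : G ⊆ closedBall x (3 * r) := fun z ⟨hz, _⟩ => mem_closedBall.mpr
    (by linarith [mem_ball.mp hz, dist_triangle4 z z₀ y x, dist_comm x y, dist_comm y z₀])
  have hEG : Disjoint (ntInaccessible Ω q ρ) G :=
    (ntInaccessible_disjoint_ball_inter_frontier hq0.le hy hyz₀ (by linarith)).mono_right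
      (inter_subset_inter_left _ (ball_subset_ball hcrd))
  have hB : μH[(n : ℝ) - 1].restrict (frontier Ω) (closedBall x (3 * r)) ≤
      μH[(n : ℝ) - 1] (frontier Ω ∩ ball x (4 * r)) := by
    rw [Measure.restrict_apply' hF.measurableSet, inter_comm]
    exact measure_mono (inter_subset_inter_right _ (closedBall_subset_ball (by linarith)))
  have hratio : q / 2 * (c * r) / (4 * r) = q * c / 8 := by
    field_simp
    ring
  refine measure_inter_le_one_sub_mul hGB
    (measurableSet_ball.inter hF.measurableSet).nullMeasurableSet hEG
    (hB.trans_lt ((hAR.2.2 x hx _ (by positivity) hrD).2.trans_lt ENNReal.ofReal_lt_top)).ne ?_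
  calc _ ≤ ENNReal.ofReal (C⁻¹ ^ 2 * (q * c / 8) ^ (n - 1)) *
        μH[(n : ℝ) - 1] (frontier Ω ∩ ball x (4 * r)) := by gcongr
    _ ≤ μH[(n : ℝ) - 1] (frontier Ω ∩ ball z₀ (q / 2 * (c * r))) := by
        rw [← hratio]
        exact hAR.le_measure_inter_ball hx hz₀ (by positivity) (by linarith) hrD
    _ = _ := by
        rw [Measure.restrict_apply' hF.measurableSet, inter_assoc, inter_self, inter_comm]

theorem frequently_measure_ntInaccessible_inter_closedBall_le (hn : 1 ≤ n)
    (hAR : AhlforsRegularWith n (frontier Ω) C) (hD : ediam (frontier Ω) ≠ 0) (hq0 : 0 < q)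
    (hq1 : q ≤ 1) (hρ : 0 < ρ) {x : Euc n} (hx : x ∈ frontier Ω)
    (hdens : 0 < limsup (fun r : ℝ => volume (Ω ∩ ball x r) / ENNReal.ofReal (r ^ n)) (𝓝[>] 0)) :
    ∃ e < 1, ∃ᶠ r in 𝓝[>] (0 : ℝ),
      μH[(n : ℝ) - 1].restrict (frontier Ω) (ntInaccessible Ω q ρ ∩ closedBall x r) ≤
        e * μH[(n : ℝ) - 1].restrict (frontier Ω) (closedBall x r) := by
  have hC : 0 < C := one_pos.trans hAR.1
  obtain ⟨δ, -, hδ0, hδ⟩ := ENNReal.lt_iff_exists_real_btwn.mp hdens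
  have hδ0 : 0 < δ := ENNReal.ofReal_pos.mp hδ0
  obtain ⟨c, hc0, hcork⟩ := hAR.exists_corkscrew hn hδ0
  obtain ⟨R, hR0, hR⟩ := exists_pos_forall_ofReal_lt_two_mul_ediam hD
  refine ⟨_, ENNReal.sub_lt_self ENNReal.one_ne_top one_ne_zero
    (ENNReal.ofReal_pos.mpr (by positivity : 0 < C⁻¹ ^ 2 * (q * c / 8) ^ (n - 1))).ne', ?_⟩
  have hsmall : ∀ᶠ r in 𝓝[>] (0 : ℝ), 0 < r ∧ r < min (R / 4) (ρ / 2) :=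
    eventually_mem_nhdsWithin.and
      ((eventually_lt_nhds (by positivity)).filter_mono nhdsWithin_le_nhds)
  have h3r := ((frequently_lt_of_lt_limsup (by isBoundedDefault) hδ).and_eventually hsmall).mono
    fun r ⟨hvol, hr, hrR⟩ => by
      have hvol : ENNReal.ofReal (δ * r ^ n) < volume (Ω ∩ ball x r) := by
        rw [ENNReal.ofReal_mul hδ0.le]
        exact (ENNReal.lt_div_iff_mul_lt (Or.inl (ENNReal.ofReal_pos.mpr (by positivity)).ne')
          (Or.inl ENNReal.ofReal_ne_top)).mp hvol
      have hrD := hR (4 * r) (by linarith [min_le_left (R / 4) (ρ / 2)])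
      obtain ⟨y, hy, hxy, hcy⟩ := hcork x hx r hr hrD Ω hvol
      exact measure_ntInaccessible_inter_closedBall_le (ρ := ρ) hAR hq0 hq1 hc0 hr
        (by linarith [min_le_right (R / 4) (ρ / 2)]) hrD hx hy hxy hcy
  exact fun hev => h3r (eventually_nhdsGT_zero_mul_left three_pos hev)

theorem hausdorffMeasure_mtBoundary_inter_ntInaccessible_eq_zero (hn : 1 ≤ n)
    (hAR : AhlforsRegularWith n (frontier Ω) C) (hD : ediam (frontier Ω) ≠ 0) (hq0 : 0 < q)
    (hq1 : q ≤ 1) (hρ : 0 < ρ) :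
    μH[(n : ℝ) - 1] (mtBoundary n Ω ∩ ntInaccessible Ω q ρ) = 0 := by
  have := hAR.isLocallyFiniteMeasure_restrict hD
  have hE : mtBoundary n Ω ∩ ntInaccessible Ω q ρ ⊆ frontier Ω :=
    inter_subset_left.trans mtBoundary_subset_frontier
  rw [← Measure.restrict_eq_self _ hE]
  refine measure_eq_zero_of_frequently_le_mul _ fun x hx => ?_
  obtain ⟨e, he, hfreq⟩ :=
    frequently_measure_ntInaccessible_inter_closedBall_le hn hAR hD hq0 hq1 hρ (hE hx) hx.1.1
  exact ⟨e, he, hfreq.mono fun r hr =>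
    (measure_mono (inter_subset_inter_left _ inter_subset_right)).trans hr⟩

end StrataNull

theorem statement11_general (n : ℕ) (Ω : Set (Euc n)) (hΩ : IsOpen Ω) (C : ℝ)
    (hAR : AhlforsRegularWith n (frontier Ω) C) :
    μH[(n : ℝ) - 1] (mtBoundary n Ω \ ntaBoundary n Ω) = 0 := by
  -- covers `n = 0`, and the case where Ahlfors regularity is vacuous (no admissible radii)
  by_cases hF : (frontier Ω).Subsingleton
  · rw [sdiff_eq_empty.mpr (mtBoundary_subset_ntaBoundary_of_subsingleton hΩ hF), measure_empty]
  have hn : 1 ≤ n := Nat.one_le_iff_ne_zero.mpr fun h => by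
    subst h
    exact hF subsingleton_of_subsingleton
  have hD : ediam (frontier Ω) ≠ 0 := fun h => hF (ediam_eq_zero_iff.mp h)
  refine measure_mono_null mtBoundary_diff_ntaBoundary_subset
    (measure_iUnion_null fun m => measure_iUnion_null fun l => ?_)
  exact hausdorffMeasure_mtBoundary_inter_ntInaccessible_eq_zero hn hAR hD (by positivity)
    (div_le_one_of_le₀ (by linarith [m.cast_nonneg (α := ℝ)]) (by positivity)) (by positivity)

/-- for an open nonempty proper subset of `ℝⁿ` with Ahlfors regular
boundary, the measure-theoretic boundary is covered, up to an `ℋ^{n-1}`-null set, by the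
nontangentially accessible boundary. -/
theorem statement11 (n : ℕ) (Ω : Set (Euc n)) (hΩ : IsOpen Ω) (hne : Ω.Nonempty)
    (hprop : Ω ≠ univ) (C : ℝ) (hAR : AhlforsRegularWith n (frontier Ω) C) :
    μH[(n : ℝ) - 1] (mtBoundary n Ω \ ntaBoundary n Ω) = 0 :=
  statement11_general n Ω hΩ C hAR
end
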